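/- arXiv:1701.08045 — 6 statements merged into one kernel-verified Lean document; each statement's English description precedes it below -/
import Mathlib

section
/- Let ω₁ > 0, H ∈ ℝ^{(n_X n_Y)×(n_X n_Y)}, Y ∈ ℝ^{n_Y×m_Y}, and V = {X ∈ ℝ^{n_X×m_X} : ‖X‖_F = ω₁}. Writing H = Σ_{i,j} h_{i,j} ⊗ e_i e_jᵀ with h_{i,j} ∈ ℝ^{n_X×n_X} (blocks indexed by the second Kronecker factor), define H* ∈ ℝ^{n_Y×n_Y} by (H*)_{i,j} = tr(h_{i,j}). Then ∫_V (X ⊗ Y)ᵀ H (X ⊗ Y) dX = (ω₁² |V| / (n_X m_X)) · I_{m_X} ⊗ (Yᵀ H* Y), where ⊗ denotes the Kronecker product. -/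
/-!
Coordinate sign changes and coordinate transpositions are linear isometries preserving the
sphere, hence they preserve its Hausdorff measure. So the second moments `∫ x_p x_q` vanish for
`p ≠ q` and are all equal for `p = q`; as `∑_p x_p² = ω₁²` on the sphere, each diagonal moment is
`ω₁² |V| / (n_X m_X)`. The `(a, b)` entry of `(X ⊗ Y)ᵀ H (X ⊗ Y)` is a quadratic form in the
entries of `X`, and replacing each product of entries by its moment leaves
`(I ⊗ Yᵀ H* Y)_{a,b}`.

Linearity of the integral needs `|V| < ∞`: the sphere is covered by the radial projections of the
faces of a cube, which are Lipschitz images of balls of dimension `n_X m_X - 1`.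
-/

open MeasureTheory Matrix Kronecker

noncomputable def matOf {n m : ℕ} (x : EuclideanSpace ℝ (Fin n × Fin m)) :
    Matrix (Fin n) (Fin m) ℝ := Matrix.of fun i j => x (i, j)

open Metric NormedSpace
open scoped ENNReal

theorem lipschitzOnWith_normalize {E : Type*} [NormedAddCommGroup E] [NormedSpace ℝ E] :
    LipschitzOnWith 2 (normalize : E → E) {x | 1 ≤ ‖x‖} := by
  refine LipschitzOnWith.of_dist_le_mul fun x hx y hy => ?_
  simp only [Set.mem_ofPred_eq] at hx hy
  have hx0 : 0 < ‖x‖ := one_pos.trans_le hx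
  have hy0 : 0 < ‖y‖ := one_pos.trans_le hy
  have hsplit :
      normalize x - normalize y = ‖x‖⁻¹ • (x - y) + (‖x‖⁻¹ * ‖y‖⁻¹ * (‖y‖ - ‖x‖)) • y := by
    simp only [NormedSpace.normalize]
    have : ‖x‖⁻¹ * ‖y‖⁻¹ * (‖y‖ - ‖x‖) = ‖x‖⁻¹ - ‖y‖⁻¹ := by field_simp
    rw [this]; module
  rw [dist_eq_norm, dist_eq_norm, hsplit, NNReal.coe_ofNat]
  calc ‖‖x‖⁻¹ • (x - y) + (‖x‖⁻¹ * ‖y‖⁻¹ * (‖y‖ - ‖x‖)) • y‖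
      ≤ ‖x‖⁻¹ * ‖x - y‖ + ‖x‖⁻¹ * |‖y‖ - ‖x‖| := by
        refine (norm_add_le _ _).trans_eq ?_
        rw [norm_smul, norm_smul, Real.norm_eq_abs, Real.norm_eq_abs, abs_mul, abs_mul,
          abs_inv, abs_inv, abs_norm, abs_norm]
        field_simp
    _ ≤ 1 * ‖x - y‖ + 1 * ‖x - y‖ := by
        have hinv : ‖x‖⁻¹ ≤ 1 := inv_le_one_of_one_le₀ hx
        have : |‖y‖ - ‖x‖| ≤ ‖x - y‖ := by rw [norm_sub_rev]; exact abs_norm_sub_norm_le y x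
        gcongr
    _ = 2 * ‖x - y‖ := by ring

theorem setIntegral_sphere_comp_linearIsometryEquiv {E F : Type*} [NormedAddCommGroup E]
    [NormedSpace ℝ E] [MeasurableSpace E] [BorelSpace E] [NormedAddCommGroup F] [NormedSpace ℝ F]
    (e : E ≃ₗᵢ[ℝ] E) (d r : ℝ) (f : E → F) :
    ∫ x in sphere (0 : E) r, f (e x) ∂μH[d] = ∫ x in sphere (0 : E) r, f x ∂μH[d] := by
  have h := (e.toIsometryEquiv.measurePreserving_hausdorffMeasure d).setIntegral_preimage_emb
    e.toHomeomorph.measurableEmbedding f (sphere 0 r)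
  have hpre : e.toIsometryEquiv ⁻¹' sphere 0 r = sphere 0 r := by ext x; simp
  rwa [hpre] at h

theorem Continuous.integrableOn_sphere {E F : Type*} [NormedAddCommGroup E]
    [NormedSpace ℝ E] [ProperSpace E] [MeasurableSpace E] [BorelSpace E] [NormedAddCommGroup F]
    {f : E → F} (hf : Continuous f) {d r : ℝ} (hS : μH[d] (sphere (0 : E) r) ≠ ∞) :
    IntegrableOn f (sphere 0 r) μH[d] := by
  obtain ⟨C, hC⟩ := (isCompact_sphere (0 : E) r).exists_bound_of_continuousOn hf.continuousOn
  exact Measure.integrableOn_of_bounded hS hf.aestronglyMeasurable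
    (ae_restrict_of_forall_mem isClosed_sphere.measurableSet hC)

section SphereMeasure

variable {ι : Type*} [Fintype ι] [DecidableEq ι]

noncomputable def insertCoord (p : ι) (ε : ℝ) (y : EuclideanSpace ℝ {i // i ≠ p}) :
    EuclideanSpace ℝ ι :=
  WithLp.toLp 2 fun i => if h : i = p then ε else y ⟨i, h⟩

theorem isometry_insertCoord (p : ι) (ε : ℝ) : Isometry (insertCoord p ε) := by
  refine Isometry.of_dist_eq fun y z => ?_
  rw [EuclideanSpace.dist_eq, EuclideanSpace.dist_eq]
  congr 1
  rw [← Fintype.sum_subtype_add_sum_subtype (· = p)]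
  have hp (i : {i // i = p}) : dist (insertCoord p ε y i) (insertCoord p ε z i) ^ 2 = 0 := by
    obtain ⟨i, rfl⟩ := i
    simp [insertCoord]
  have hne (i : {i // i ≠ p}) :
      dist (insertCoord p ε y i) (insertCoord p ε z i) = dist (y i) (z i) := by
    simp [insertCoord, dif_neg i.2]
  simp only [hp, hne, Finset.sum_const_zero, zero_add]

theorem one_le_norm_insertCoord (p : ι) {ε : ℝ} (hε : |ε| = 1) (y : EuclideanSpace ℝ {i // i ≠ p}) :
    1 ≤ ‖insertCoord p ε y‖ := by
  simpa [insertCoord, hε] using PiLp.norm_apply_le (insertCoord p ε y) p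

theorem sphere_subset_iUnion_image_insertCoord [Nonempty ι] (r : ℝ) :
    sphere (0 : EuclideanSpace ℝ ι) r ⊆ ⋃ p, ⋃ ε ∈ ({-1, 1} : Finset ℝ),
      (fun y => r • normalize (insertCoord p ε y)) '' closedBall 0 √(Fintype.card ι) := by
  intro x hx
  rw [mem_sphere_zero_iff_norm] at hx
  subst hx
  -- With `p` a coordinate of largest modulus, `x / |x p|` lies on a face `x p = ±1` of the cube.
  obtain ⟨p, hp⟩ := Finite.exists_max fun i => |x i|
  simp only [Set.mem_iUnion, Set.mem_image, exists_prop]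
  rcases eq_or_ne x 0 with rfl | hx0
  · exact ⟨p, 1, by simp, 0, by simp, by simp⟩
  have hxp : 0 < |x p| := by
    by_contra! h
    exact hx0 (PiLp.ext fun i => abs_nonpos_iff.1 ((hp i).trans h))
  refine ⟨p, x p / |x p|, ?_, WithLp.toLp 2 fun i => x i / |x p|, ?_, ?_⟩
  · have hxp0 : x p ≠ 0 := abs_pos.1 hxp
    rcases abs_choice (x p) with h | h <;> simp [h, hxp0]
  · rw [mem_closedBall_zero_iff, Real.le_sqrt (norm_nonneg _) (Nat.cast_nonneg _),
      EuclideanSpace.real_norm_sq_eq]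
    calc ∑ i : {i // i ≠ p}, (x i / |x p|) ^ 2 ≤ ∑ _i : {i // i ≠ p}, (1 : ℝ) := by
          refine Finset.sum_le_sum fun i _ => ?_
          rw [div_pow, div_le_one (by positivity), sq_le_sq, abs_abs]
          exact hp i
      _ ≤ Fintype.card ι := by simp
  · have : insertCoord p (x p / |x p|) (WithLp.toLp 2 fun i => x i / |x p|) = |x p|⁻¹ • x := by
      ext i
      by_cases h : i = p
      · subst h; simp [insertCoord, div_eq_inv_mul]
      · simp [insertCoord, h, div_eq_inv_mul]
    rw [this, normalize_smul_of_pos (inv_pos.2 hxp), norm_smul_normalize]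

theorem hausdorffMeasure_sphere_lt_top [Nonempty ι] (r : ℝ) :
    μH[(Fintype.card ι : ℝ) - 1] (sphere (0 : EuclideanSpace ℝ ι) r) < ∞ := by
  have hd : (0 : ℝ) ≤ (Fintype.card ι : ℝ) - 1 :=
    sub_nonneg.2 (Nat.one_le_cast.2 Fintype.card_pos)
  refine (measure_mono (sphere_subset_iUnion_image_insertCoord r)).trans_lt ?_
  refine (measure_iUnion_fintype_le _ _).trans_lt (ENNReal.sum_lt_top.2 fun p _ => ?_)
  refine (measure_biUnion_finset_le _ _).trans_lt (ENNReal.sum_lt_top.2 fun ε hε => ?_)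
  have hε : |ε| = 1 := by
    rw [Finset.mem_insert, Finset.mem_singleton] at hε
    rcases hε with rfl | rfl <;> simp
  have hK : μH[(Fintype.card ι : ℝ) - 1]
      (closedBall (0 : EuclideanSpace ℝ {i // i ≠ p}) √(Fintype.card ι)) < ∞ := by
    have : (Fintype.card ι : ℝ) - 1 = Module.finrank ℝ (EuclideanSpace ℝ {i // i ≠ p}) := by
      simp [Nat.cast_sub Fintype.card_pos]
    rw [this]
    exact (isCompact_closedBall _ _).measure_lt_top
  have hlip : LipschitzWith (‖r‖₊ * 2) fun y => r • normalize (insertCoord p ε y) := by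
    have := lipschitzOnWith_normalize.comp
      ((isometry_insertCoord p ε).lipschitz.lipschitzOnWith (s := Set.univ))
      fun y _ => one_le_norm_insertCoord p hε y
    rw [mul_one, lipschitzOnWith_univ] at this
    exact (lipschitzWith_smul r).comp this
  exact (hlip.hausdorffMeasure_image_le hd _).trans_lt
    (ENNReal.mul_lt_top (ENNReal.rpow_lt_top_of_nonneg hd ENNReal.coe_ne_top) hK)

end SphereMeasure

section SecondMoments

variable {ι : Type*} [Fintype ι] [DecidableEq ι] (d r : ℝ)

theorem integral_sphere_coord_mul_coord_of_ne {p q : ι} (hpq : p ≠ q) :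
    ∫ x in sphere (0 : EuclideanSpace ℝ ι) r, x p * x q ∂μH[d] = 0 := by
  let reflect : EuclideanSpace ℝ ι ≃ₗᵢ[ℝ] EuclideanSpace ℝ ι := LinearIsometryEquiv.piLpCongrRight 2
    fun i => if i = p then LinearIsometryEquiv.neg ℝ else LinearIsometryEquiv.refl ℝ ℝ
  have h := setIntegral_sphere_comp_linearIsometryEquiv reflect d r fun x => x p * x q
  simp only [reflect, LinearIsometryEquiv.piLpCongrRight_apply, PiLp.toLp_apply, if_neg hpq.symm,
    if_pos, LinearIsometryEquiv.coe_neg, LinearIsometryEquiv.coe_refl, id_eq, neg_mul,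
    integral_neg] at h
  linarith

theorem integral_sphere_coord_sq_eq (p q : ι) :
    ∫ x in sphere (0 : EuclideanSpace ℝ ι) r, x p ^ 2 ∂μH[d] =
      ∫ x in sphere (0 : EuclideanSpace ℝ ι) r, x q ^ 2 ∂μH[d] := by
  have h := setIntegral_sphere_comp_linearIsometryEquiv
    (LinearIsometryEquiv.piLpCongrLeft 2 ℝ ℝ (Equiv.swap p q)) d r fun x => x p ^ 2
  simpa using h.symm

theorem integral_sphere_coord_sq (hS : μH[d] (sphere (0 : EuclideanSpace ℝ ι) r) ≠ ∞) (p : ι) :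
    ∫ x in sphere (0 : EuclideanSpace ℝ ι) r, x p ^ 2 ∂μH[d] =
      r ^ 2 * (μH[d] (sphere (0 : EuclideanSpace ℝ ι) r)).toReal / Fintype.card ι := by
  have hsum : ∑ q : ι, ∫ x in sphere (0 : EuclideanSpace ℝ ι) r, x q ^ 2 ∂μH[d] =
      r ^ 2 * (μH[d] (sphere (0 : EuclideanSpace ℝ ι) r)).toReal := by
    rw [← integral_finsetSum _ fun q _ =>
      (by fun_prop : Continuous fun x : EuclideanSpace ℝ ι => x q ^ 2).integrableOn_sphere hS]
    rw [setIntegral_congr_fun isClosed_sphere.measurableSet (g := fun _ => r ^ 2) fun x hx => by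
      rw [← EuclideanSpace.real_norm_sq_eq, mem_sphere_zero_iff_norm.1 hx]]
    simp [mul_comm, Measure.real]
  simp only [integral_sphere_coord_sq_eq d r _ p, Finset.sum_const, Finset.card_univ,
    nsmul_eq_mul] at hsum
  have hcard : (Fintype.card ι : ℝ) ≠ 0 := Nat.cast_ne_zero.2 (Fintype.card_pos_iff.2 ⟨p⟩).ne'
  rw [← hsum]
  field_simp

theorem integral_sphere_coord_mul_coord
    (hS : μH[d] (sphere (0 : EuclideanSpace ℝ ι) r) ≠ ∞) (p q : ι) :
    ∫ x in sphere (0 : EuclideanSpace ℝ ι) r, x p * x q ∂μH[d] =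
      if p = q then r ^ 2 * (μH[d] (sphere (0 : EuclideanSpace ℝ ι) r)).toReal / Fintype.card ι
      else 0 := by
  split_ifs with hpq
  · subst hpq
    simp_rw [← sq]
    exact integral_sphere_coord_sq d r hS p
  · exact integral_sphere_coord_mul_coord_of_ne d r hpq

theorem integral_sphere_sum_sum_coord_mul_coord {α β : Type*} [Fintype α] [Fintype β]
    (hS : μH[d] (sphere (0 : EuclideanSpace ℝ ι) r) ≠ ∞) (c : α → β → ℝ)
    (f : α → ι) (g : β → ι) :
    ∫ x in sphere (0 : EuclideanSpace ℝ ι) r, ∑ u, ∑ v, c u v * (x (f u) * x (g v)) ∂μH[d] =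
      r ^ 2 * (μH[d] (sphere (0 : EuclideanSpace ℝ ι) r)).toReal / Fintype.card ι *
        ∑ u, ∑ v, if f u = g v then c u v else 0 := by
  rw [integral_finsetSum _ fun u _ => (by fun_prop : Continuous fun x : EuclideanSpace ℝ ι =>
    ∑ v, c u v * (x (f u) * x (g v))).integrableOn_sphere hS]
  simp_rw [Finset.mul_sum]
  refine Finset.sum_congr rfl fun u _ => ?_
  rw [integral_finsetSum _ fun v _ => (by fun_prop : Continuous fun x : EuclideanSpace ℝ ι =>
    c u v * (x (f u) * x (g v))).integrableOn_sphere hS]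
  refine Finset.sum_congr rfl fun v _ => ?_
  rw [integral_const_mul, integral_sphere_coord_mul_coord d r hS]
  split_ifs <;> ring

end SecondMoments

namespace Matrix

variable {R l m n k : Type*} [CommSemiring R] [Fintype l] [Fintype n]

def partialTraceFst (H : Matrix (l × n) (l × n) R) : Matrix n n R :=
  of fun i j => ∑ a, H (a, i) (a, j)

theorem kronecker_transpose_mul_mul_kronecker_apply (X : Matrix l m R) (Y : Matrix n k R)
    (H : Matrix (l × n) (l × n) R) (a b : m × k) :
    ((X ⊗ₖ Y)ᵀ * H * (X ⊗ₖ Y)) a b =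
      ∑ u, ∑ v, Y u.2 a.2 * H u v * Y v.2 b.2 * (X u.1 a.1 * X v.1 b.1) := by
  simp only [mul_apply, transpose_apply, kroneckerMap_apply, Finset.sum_mul]
  rw [Finset.sum_comm]
  exact Fintype.sum_congr _ _ fun u => Fintype.sum_congr _ _ fun v => by ring

theorem sum_sum_ite_eq_one_kronecker_apply [DecidableEq l] [DecidableEq m]
    (Y : Matrix n k R) (H : Matrix (l × n) (l × n) R) (a b : m × k) :
    ∑ u : l × n, ∑ v : l × n,
        (if (u.1, a.1) = (v.1, b.1) then Y u.2 a.2 * H u v * Y v.2 b.2 else 0) =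
      ((1 : Matrix m m R) ⊗ₖ (Yᵀ * H.partialTraceFst * Y)) a b := by
  simp only [kroneckerMap_apply, one_apply, Prod.mk.injEq, mul_apply, transpose_apply,
    partialTraceFst, of_apply]
  split_ifs with hab
  · simp only [hab, and_true, Fintype.sum_prod_type, Finset.sum_ite_irrel, Finset.sum_const_zero,
      Finset.sum_ite_eq, Finset.mem_univ, if_true, Finset.mul_sum, Finset.sum_mul, one_mul]
    calc ∑ i : l, ∑ s : n, ∑ t : n, Y s a.2 * H (i, s) (i, t) * Y t b.2
        = ∑ s : n, ∑ i : l, ∑ t : n, Y s a.2 * H (i, s) (i, t) * Y t b.2 := Finset.sum_comm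
      _ = ∑ s : n, ∑ t : n, ∑ i : l, Y s a.2 * H (i, s) (i, t) * Y t b.2 :=
        Fintype.sum_congr _ _ fun _ => Finset.sum_comm
      _ = _ := Finset.sum_comm
  · simp [hab]

end Matrix

theorem stmt1_general (nX mX nY mY : ℕ) (hnX : 0 < nX) (ω₁ : ℝ)
    (H : Matrix (Fin nX × Fin nY) (Fin nX × Fin nY) ℝ)
    (Y : Matrix (Fin nY) (Fin mY) ℝ) :
    ∀ a b : Fin mX × Fin mY,
      (∫ x in Metric.sphere (0 : EuclideanSpace ℝ (Fin nX × Fin mX)) ω₁,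
          ((matOf x ⊗ₖ Y)ᵀ * H * (matOf x ⊗ₖ Y)) a b ∂(μH[(nX * mX : ℝ) - 1])) =
        ω₁ ^ 2 *
            (μH[(nX * mX : ℝ) - 1]
              (Metric.sphere (0 : EuclideanSpace ℝ (Fin nX × Fin mX)) ω₁)).toReal /
            (nX * mX) *
          (((1 : Matrix (Fin mX) (Fin mX) ℝ) ⊗ₖ
              (Yᵀ * (Matrix.of fun i j : Fin nY => ∑ a' : Fin nX, H (a', i) (a', j)) * Y))
            a b) := by
  intro a b
  have : Nonempty (Fin nX × Fin mX) := ⟨(⟨0, hnX⟩, a.1)⟩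
  have hcard : (Fintype.card (Fin nX × Fin mX) : ℝ) = nX * mX := by simp
  have hS := (hausdorffMeasure_sphere_lt_top (ι := Fin nX × Fin mX) ω₁).ne
  rw [hcard] at hS
  simp only [kronecker_transpose_mul_mul_kronecker_apply, matOf, of_apply]
  rw [integral_sphere_sum_sum_coord_mul_coord _ _ hS (fun u v => Y u.2 a.2 * H u v * Y v.2 b.2)
    (fun u => (u.1, a.1)) (fun v => (v.1, b.1)), hcard, sum_sum_ite_eq_one_kronecker_apply]
  rfl

/-- `∫_V (X ⊗ Y)ᵀ H (X ⊗ Y) dX = (ω₁²|V|/(n_X m_X)) I_{m_X} ⊗ (Yᵀ H* Y)`,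
where `(H*)_{i,j} = tr(h_{i,j})`, i.e. `(H*)_{i,j} = ∑_a H_{(a,i),(a,j)}`. -/
theorem stmt1 (nX mX nY mY : ℕ) (hnX : 0 < nX) (hmX : 0 < mX) (ω₁ : ℝ) (hω : 0 < ω₁)
    (H : Matrix (Fin nX × Fin nY) (Fin nX × Fin nY) ℝ)
    (Y : Matrix (Fin nY) (Fin mY) ℝ) :
    ∀ a b : Fin mX × Fin mY,
      (∫ x in Metric.sphere (0 : EuclideanSpace ℝ (Fin nX × Fin mX)) ω₁,
          ((matOf x ⊗ₖ Y)ᵀ * H * (matOf x ⊗ₖ Y)) a b ∂(μH[(nX * mX : ℝ) - 1])) =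
        ω₁ ^ 2 *
            (μH[(nX * mX : ℝ) - 1]
              (Metric.sphere (0 : EuclideanSpace ℝ (Fin nX × Fin mX)) ω₁)).toReal /
            (nX * mX) *
          (((1 : Matrix (Fin mX) (Fin mX) ℝ) ⊗ₖ
              (Yᵀ * (Matrix.of fun i j : Fin nY => ∑ a' : Fin nX, H (a', i) (a', j)) * Y))
            a b) :=
  stmt1_general nX mX nY mY hnX ω₁ H Y
end

section
/- Let A^{(k)}, B^{(k)} be sequences of symmetric block 2×2 matrices B^{(k)} = [[B_{11}^{(k)}, B_{12}^{(k)}],[B_{12}^{(k)T}, B_{22}^{(k)}]] with B_{11}^{(k)} → A₁₁ symmetric positive definite, B_{12}^{(k)} bounded, and σ_min(B_{22}^{(k)}) → ∞. Then for large k, B^{(k)} is invertible and the (1,1) block of (B^{(k)})^{-1} converges to A₁₁^{-1}, while the (2,2) and (1,2) blocks of (B^{(k)})^{-1} converge to 0. -/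
open Matrix Filter Topology

/-!
Write `S = B₁₁ - B₁₂ B₂₂⁻¹ B₁₂ᵀ` for the Schur complement. Every entry of `B₂₂⁻¹` is at most
`1 / σ_min(B₂₂)` in absolute value, so `B₂₂⁻¹ → 0`; as `B₁₂` is bounded, `S → A₁₁`, which is
invertible, hence `S⁻¹ → A₁₁⁻¹`. The block inverse formula gives the blocks `S⁻¹`,
`-S⁻¹ B₁₂ B₂₂⁻¹` and `B₂₂⁻¹ + B₂₂⁻¹ B₁₂ᵀ S⁻¹ B₁₂ B₂₂⁻¹`; each product containing a factor
`B₂₂⁻¹` tends to `0` because all the other factors stay bounded.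
-/

/-- Euclidean minimal singular value of a matrix. -/
noncomputable def sminE {a b : Type*} [Fintype a] [Fintype b] (M : Matrix a b ℝ) : ℝ :=
  sInf {t | ∃ x : b → ℝ, Real.sqrt (∑ i, x i ^ 2) = 1 ∧
    t = Real.sqrt (∑ i, M.mulVec x i ^ 2)}

section sminE

variable {m n : Type*} [Fintype m] [Fintype n]

lemma sqrt_sum_sq_eq_norm_toLp (x : n → ℝ) : √(∑ i, x i ^ 2) = ‖WithLp.toLp 2 x‖ := by
  simp [EuclideanSpace.norm_eq]

lemma sminE_mul_norm_le (M : Matrix m n ℝ) (x : n → ℝ) :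
    sminE M * ‖WithLp.toLp 2 x‖ ≤ ‖WithLp.toLp 2 (M *ᵥ x)‖ := by
  rcases eq_or_ne x 0 with rfl | hx
  · simp
  have hx : 0 < ‖WithLp.toLp 2 x‖ := by simpa using hx
  set u := ‖WithLp.toLp 2 x‖⁻¹ • x
  have hu : √(∑ i, u i ^ 2) = 1 := by
    rw [sqrt_sum_sq_eq_norm_toLp, WithLp.toLp_smul, norm_smul, norm_inv, norm_norm,
      inv_mul_cancel₀ hx.ne']
  have hle : sminE M ≤ √(∑ i, (M *ᵥ u) i ^ 2) :=
    csInf_le ⟨0, by rintro t ⟨y, -, rfl⟩; positivity⟩ ⟨u, hu, rfl⟩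
  rw [sqrt_sum_sq_eq_norm_toLp, mulVec_smul, WithLp.toLp_smul, norm_smul, norm_inv, norm_norm,
    inv_mul_eq_div, le_div_iff₀ hx] at hle
  exact hle

lemma mulVec_injective_of_sminE_pos (M : Matrix m n ℝ) (h : 0 < sminE M) :
    Function.Injective M.mulVec := by
  intro x y hxy
  have hle := sminE_mul_norm_le M (x - y)
  rw [mulVec_sub, hxy, sub_self, WithLp.toLp_zero, norm_zero] at hle
  have hxy0 : ‖WithLp.toLp 2 (x - y)‖ = 0 :=
    le_antisymm (nonpos_of_mul_nonpos_right hle h) (norm_nonneg _)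
  simpa [sub_eq_zero] using hxy0

lemma isUnit_of_sminE_pos [DecidableEq n] (M : Matrix n n ℝ) (h : 0 < sminE M) : IsUnit M :=
  mulVec_injective_iff_isUnit.1 (mulVec_injective_of_sminE_pos M h)

lemma abs_inv_apply_le_inv_sminE [DecidableEq n] (M : Matrix n n ℝ) (h : 0 < sminE M) (i j : n) :
    |M⁻¹ i j| ≤ (sminE M)⁻¹ := by
  have hM : IsUnit M.det := (isUnit_iff_isUnit_det M).1 (isUnit_of_sminE_pos M h)
  have hcol := sminE_mul_norm_le M (M⁻¹ *ᵥ Pi.single j 1)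
  rw [mulVec_mulVec, mul_nonsing_inv _ hM, one_mulVec, mulVec_single_one] at hcol
  have hentry : |M⁻¹ i j| ≤ ‖WithLp.toLp 2 (M⁻¹.col j)‖ :=
    PiLp.norm_apply_le (WithLp.toLp 2 (M⁻¹.col j)) i
  rw [← one_div (sminE M), le_div_iff₀' h]
  calc sminE M * |M⁻¹ i j| ≤ sminE M * ‖WithLp.toLp 2 (M⁻¹.col j)‖ := by gcongr
    _ ≤ _ := hcol
    _ = 1 := by simp

lemma tendsto_inv_zero_of_tendsto_sminE_atTop [DecidableEq n] {ι : Type*} {l : Filter ι}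
    {M : ι → Matrix n n ℝ} (h : Tendsto (fun k => sminE (M k)) l atTop) :
    Tendsto (fun k => (M k)⁻¹) l (𝓝 0) :=
  tendsto_pi_nhds.2 fun i => tendsto_pi_nhds.2 fun j =>
    squeeze_zero_norm' ((h.eventually_gt_atTop 0).mono fun k hk =>
      abs_inv_apply_le_inv_sminE (M k) hk i j) (tendsto_inv_atTop_zero.comp h)

end sminE

section BlockInverse

variable {m n α : Type*} [Fintype m] [Fintype n] [DecidableEq m] [DecidableEq n] [CommRing α]

variable {A : Matrix m m α} {B : Matrix m n α} {C : Matrix n m α} {D : Matrix n n α}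

theorem isUnit_det_fromBlocks_of_isUnit_det₂₂ (hD : IsUnit D.det)
    (hS : IsUnit (A - B * D⁻¹ * C).det) : IsUnit (fromBlocks A B C D).det := by
  let := D.invertibleOfIsUnitDet hD
  rw [det_fromBlocks₂₂, invOf_eq_nonsing_inv]
  exact hD.mul hS

theorem inv_fromBlocks_of_isUnit_det₂₂ (hD : IsUnit D.det) (hS : IsUnit (A - B * D⁻¹ * C).det) :
    (fromBlocks A B C D)⁻¹ =
      fromBlocks (A - B * D⁻¹ * C)⁻¹ (-((A - B * D⁻¹ * C)⁻¹ * B * D⁻¹))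
        (-(D⁻¹ * C * (A - B * D⁻¹ * C)⁻¹))
        (D⁻¹ + D⁻¹ * C * (A - B * D⁻¹ * C)⁻¹ * B * D⁻¹) := by
  let := D.invertibleOfIsUnitDet hD
  let : Invertible (A - B * ⅟D * C) := by
    rw [invOf_eq_nonsing_inv]
    exact invertibleOfIsUnitDet _ hS
  let := fromBlocks₂₂Invertible A B C D
  rw [← invOf_eq_nonsing_inv, invOf_fromBlocks₂₂_eq, invOf_eq_nonsing_inv, invOf_eq_nonsing_inv]

end BlockInverse

theorem Filter.Tendsto.matrix_inv {ι n 𝕜 : Type*} [Fintype n] [DecidableEq n] [NormedField 𝕜]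
    {F : Filter ι} {M : ι → Matrix n n 𝕜} {M₀ : Matrix n n 𝕜}
    (h : Tendsto M F (𝓝 M₀)) (h₀ : M₀.det ≠ 0) : Tendsto (fun k => (M k)⁻¹) F (𝓝 M₀⁻¹) := by
  refine (continuousAt_matrix_inv M₀ ?_).tendsto.comp h
  rw [Ring.inverse_eq_inv']
  exact continuousAt_inv₀ h₀

section LinftyOpNorm

-- The ℓ∞ operator norm is submultiplicative on rectangular matrices and induces the product
-- topology; it serves only to bound products.
attribute [local instance] Matrix.linftyOpSeminormedAddCommGroup

variable {ι l m n α 𝕜 : Type*} [Fintype l] [Fintype m] [Fintype n] {F : Filter ι}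

theorem linfty_opNorm_le_of_forall_norm_apply_le [SeminormedAddCommGroup α] (A : Matrix m n α)
    {C : ℝ} (hC : 0 ≤ C) (h : ∀ i j, ‖A i j‖ ≤ C) : ‖A‖ ≤ Fintype.card n * C := by
  lift C to NNReal using hC
  suffices ‖A‖₊ ≤ Fintype.card n * C by exact_mod_cast this
  rw [linfty_opNNNorm_def]
  refine Finset.sup_le fun i _ => ?_
  have := Finset.sum_le_card_nsmul Finset.univ (fun j => ‖A i j‖₊) C fun j _ => h i j
  rwa [Finset.card_univ, nsmul_eq_mul] at this

theorem isBoundedUnder_norm_of_forall_norm_apply_le [SeminormedAddCommGroup α]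
    {M : ι → Matrix m n α} (h : ∃ c, ∀ k i j, ‖M k i j‖ ≤ c) :
    IsBoundedUnder (· ≤ ·) F (‖M ·‖) := by
  obtain ⟨c, hc⟩ := h
  exact isBoundedUnder_of ⟨Fintype.card n * |c|, fun k =>
    linfty_opNorm_le_of_forall_norm_apply_le _ (abs_nonneg c) fun i j =>
      (hc k i j).trans (le_abs_self c)⟩

section NonUnitalSeminormedRing

variable [NonUnitalSeminormedRing α]

theorem Filter.Tendsto.zero_matrix_mul_isBoundedUnder {M : ι → Matrix l m α}
    {N : ι → Matrix m n α}
    (hM : Tendsto M F (𝓝 0)) (hN : IsBoundedUnder (· ≤ ·) F (‖N ·‖)) :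
    Tendsto (fun k => M k * N k) F (𝓝 0) :=
  hM.op_zero_isBoundedUnder_le hN (· * ·) linfty_opNorm_mul

theorem Filter.isBoundedUnder_matrix_mul_tendsto_zero {M : ι → Matrix l m α}
    {N : ι → Matrix m n α}
    (hM : IsBoundedUnder (· ≤ ·) F (‖M ·‖)) (hN : Tendsto N F (𝓝 0)) :
    Tendsto (fun k => M k * N k) F (𝓝 0) :=
  hN.op_zero_isBoundedUnder_le hM (flip (· * ·)) fun x y =>
    (linfty_opNorm_mul y x).trans_eq (mul_comm _ _)

end NonUnitalSeminormedRing

section NormedField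

variable [NormedField 𝕜] [DecidableEq m] [DecidableEq n]

theorem tendsto_inv_fromBlocks {A : ι → Matrix m m 𝕜} {B : ι → Matrix m n 𝕜}
    {C : ι → Matrix n m 𝕜} {D : ι → Matrix n n 𝕜} {A₀ : Matrix m m 𝕜}
    (hA : Tendsto A F (𝓝 A₀)) (hA₀ : A₀.det ≠ 0) (hB : ∃ c, ∀ k i j, ‖B k i j‖ ≤ c)
    (hC : ∃ c, ∀ k i j, ‖C k i j‖ ≤ c) (hD : ∀ᶠ k in F, IsUnit (D k).det)
    (hD₀ : Tendsto (fun k => (D k)⁻¹) F (𝓝 0)) :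
    (∀ᶠ k in F, IsUnit (fromBlocks (A k) (B k) (C k) (D k)).det) ∧
    Tendsto (fun k => ((fromBlocks (A k) (B k) (C k) (D k))⁻¹).toBlocks₁₁) F (𝓝 A₀⁻¹) ∧
    Tendsto (fun k => ((fromBlocks (A k) (B k) (C k) (D k))⁻¹).toBlocks₁₂) F (𝓝 0) ∧
    Tendsto (fun k => ((fromBlocks (A k) (B k) (C k) (D k))⁻¹).toBlocks₂₂) F (𝓝 0) := by
  replace hB := isBoundedUnder_norm_of_forall_norm_apply_le (F := F) hB
  replace hC := isBoundedUnder_norm_of_forall_norm_apply_le (F := F) hC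
  set S := fun k => A k - B k * (D k)⁻¹ * C k
  have hS : Tendsto S F (𝓝 A₀) := by
    simpa using hA.sub
      ((isBoundedUnder_matrix_mul_tendsto_zero hB hD₀).zero_matrix_mul_isBoundedUnder hC)
  have hSinv : Tendsto (fun k => (S k)⁻¹) F (𝓝 A₀⁻¹) := hS.matrix_inv hA₀
  have hSinvB := hSinv.norm.isBoundedUnder_le
  have hDinvB := hD₀.norm.isBoundedUnder_le
  have hSdet : ∀ᶠ k in F, IsUnit (S k).det :=
    (((continuous_id.matrix_det.tendsto A₀).comp hS).eventually_ne hA₀).mono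
      fun _ => isUnit_iff_ne_zero.2
  have hDS := hD.and hSdet
  have hinv := hDS.mono fun k hk => inv_fromBlocks_of_isUnit_det₂₂ hk.1 hk.2
  refine ⟨hDS.mono fun k hk => isUnit_det_fromBlocks_of_isUnit_det₂₂ hk.1 hk.2, ?_, ?_, ?_⟩
  · exact hSinv.congr' (hinv.mono fun k hk => by dsimp only; rw [hk, toBlocks_fromBlocks₁₁])
  · have h₁₂ : Tendsto (fun k => -((S k)⁻¹ * (B k * (D k)⁻¹))) F (𝓝 0) := by
      simpa using (isBoundedUnder_matrix_mul_tendsto_zero hSinvB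
        (isBoundedUnder_matrix_mul_tendsto_zero hB hD₀)).neg
    exact h₁₂.congr' (hinv.mono fun k hk => by
      dsimp only; rw [hk, toBlocks_fromBlocks₁₂, Matrix.mul_assoc])
  · have h₂₂ : Tendsto (fun k => (D k)⁻¹ + (D k)⁻¹ * C k * (S k)⁻¹ * B k * (D k)⁻¹)
        F (𝓝 0) := by
      simpa using hD₀.add ((((hD₀.zero_matrix_mul_isBoundedUnder hC).zero_matrix_mul_isBoundedUnder
        hSinvB).zero_matrix_mul_isBoundedUnder hB).zero_matrix_mul_isBoundedUnder hDinvB)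
    exact h₂₂.congr' (hinv.mono fun k hk => by dsimp only; rw [hk, toBlocks_fromBlocks₂₂])

end NormedField

end LinftyOpNorm

theorem stmt4_general (p q : ℕ)
    (B11 : ℕ → Matrix (Fin p) (Fin p) ℝ) (B12 : ℕ → Matrix (Fin p) (Fin q) ℝ)
    (B22 : ℕ → Matrix (Fin q) (Fin q) ℝ)
    (A11 : Matrix (Fin p) (Fin p) ℝ) (hA : A11.PosDef)
    (h11 : Tendsto B11 atTop (𝓝 A11))
    (hbdd : ∃ C : ℝ, ∀ k, ∀ i j, |B12 k i j| ≤ C)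
    (h22 : Tendsto (fun k => sminE (B22 k)) atTop atTop) :
    (∃ K : ℕ, ∀ k ≥ K, IsUnit (Matrix.fromBlocks (B11 k) (B12 k) (B12 k)ᵀ (B22 k)).det) ∧
    Tendsto (fun k => ((Matrix.fromBlocks (B11 k) (B12 k) (B12 k)ᵀ (B22 k))⁻¹).toBlocks₁₁)
      atTop (𝓝 A11⁻¹) ∧
    Tendsto (fun k => ((Matrix.fromBlocks (B11 k) (B12 k) (B12 k)ᵀ (B22 k))⁻¹).toBlocks₁₂)
      atTop (𝓝 0) ∧
    Tendsto (fun k => ((Matrix.fromBlocks (B11 k) (B12 k) (B12 k)ᵀ (B22 k))⁻¹).toBlocks₂₂)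
      atTop (𝓝 0) := by
  obtain ⟨C, hC⟩ := hbdd
  have hB22 : ∀ᶠ k in atTop, IsUnit (B22 k).det := (h22.eventually_gt_atTop 0).mono
    fun k hk => (isUnit_iff_isUnit_det _).1 (isUnit_of_sminE_pos _ hk)
  obtain ⟨hdet, h₁₁, h₁₂, h₂₂⟩ := tendsto_inv_fromBlocks h11 hA.det_pos.ne' ⟨C, hC⟩
    ⟨C, fun k i j => hC k j i⟩ hB22 (tendsto_inv_zero_of_tendsto_sminE_atTop h22)
  exact ⟨eventually_atTop.1 hdet, h₁₁, h₁₂, h₂₂⟩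

/-- for symmetric block matrices `B⁽ᵏ⁾ = [[B₁₁, B₁₂],[B₁₂ᵀ, B₂₂]]` with
`B₁₁⁽ᵏ⁾ → A₁₁` s.p.d., `B₁₂⁽ᵏ⁾` bounded and `σ_min(B₂₂⁽ᵏ⁾) → ∞`, eventually `B⁽ᵏ⁾` is
invertible, the `(1,1)` block of the inverse tends to `A₁₁⁻¹`, and the `(1,2)` and
`(2,2)` blocks of the inverse tend to `0`. -/
theorem stmt4 (p q : ℕ)
    (B11 : ℕ → Matrix (Fin p) (Fin p) ℝ) (B12 : ℕ → Matrix (Fin p) (Fin q) ℝ)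
    (B22 : ℕ → Matrix (Fin q) (Fin q) ℝ)
    (hsym11 : ∀ k, (B11 k).IsSymm) (hsym22 : ∀ k, (B22 k).IsSymm)
    (A11 : Matrix (Fin p) (Fin p) ℝ) (hA : A11.PosDef)
    (h11 : Tendsto B11 atTop (𝓝 A11))
    (hbdd : ∃ C : ℝ, ∀ k, ∀ i j, |B12 k i j| ≤ C)
    (h22 : Tendsto (fun k => sminE (B22 k)) atTop atTop) :
    (∃ K : ℕ, ∀ k ≥ K, IsUnit (Matrix.fromBlocks (B11 k) (B12 k) (B12 k)ᵀ (B22 k)).det) ∧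
    Tendsto (fun k => ((Matrix.fromBlocks (B11 k) (B12 k) (B12 k)ᵀ (B22 k))⁻¹).toBlocks₁₁)
      atTop (𝓝 A11⁻¹) ∧
    Tendsto (fun k => ((Matrix.fromBlocks (B11 k) (B12 k) (B12 k)ᵀ (B22 k))⁻¹).toBlocks₁₂)
      atTop (𝓝 0) ∧
    Tendsto (fun k => ((Matrix.fromBlocks (B11 k) (B12 k) (B12 k)ᵀ (B22 k))⁻¹).toBlocks₂₂)
      atTop (𝓝 0) :=
  stmt4_general p q B11 B12 B22 A11 hA h11 hbdd h22
end

section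
/- Let A ∈ ℝ^{n_L × r_L}·core·ℝ^{r_R × n_R} be a tensor-train representation with cores (L, N, R), where L ∈ ℝ^{n_L × r_L}, N(j) ∈ ℝ^{r_L × r_R} for j = 1,…,n_N, and R ∈ ℝ^{r_R × n_R}, all with minimal ranks (i.e. L has full column rank r_L and R has full row rank r_R). Then another triple (L̃, Ñ, R̃) of the same dimensions satisfies L̃ Ñ(j) R̃ = L N(j) R for all j if and only if there exist invertible matrices T₁ ∈ ℝ^{r_L × r_L} and T₂ ∈ ℝ^{r_R × r_R} with L̃ = L T₁^{-1}, Ñ(j) = T₁ N(j) T₂^{-1} for all j, and R̃ = T₂ R. -/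
open Matrix Module

set_option linter.unusedSectionVars false

section aux
variable {m n p : Type*} [Fintype m] [Fintype n] [Fintype p] [DecidableEq n] [DecidableEq p] [DecidableEq m]

lemma myrank_def (A : Matrix m n ℝ) : A.rank = finrank ℝ (LinearMap.range A.mulVecLin) := rfl

lemma my_ext_mulVec {X Y : Matrix m n ℝ} (h : ∀ v, X *ᵥ v = Y *ᵥ v) : X = Y := by
  ext i j
  have := congrFun (h (Pi.single j 1)) i
  simpa [Matrix.mulVec_single_one] using this

lemma my_isUnit_of_rank_eq {M : Matrix n n ℝ} (h : M.rank = Fintype.card n) : IsUnit M := by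
  rw [← Matrix.mulVec_surjective_iff_isUnit]
  have htop : LinearMap.range M.mulVecLin = ⊤ := by
    apply Submodule.eq_top_of_finrank_eq
    rw [← myrank_def, h, Module.finrank_fintype_fun_eq_card]
  intro v
  obtain ⟨w, hw⟩ := LinearMap.range_eq_top.mp htop v
  exact ⟨w, hw⟩

lemma my_exists_left_inv {M : Matrix m n ℝ} (h : M.rank = Fintype.card n) :
    ∃ B : Matrix n m ℝ, B * M = 1 := by
  have h1 : (Mᵀ * M).rank = Fintype.card n := by rw [Matrix.rank_transpose_mul_self, h]
  have h2 : IsUnit (Mᵀ * M).det := (Matrix.isUnit_iff_isUnit_det _).mp (my_isUnit_of_rank_eq h1)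
  exact ⟨(Mᵀ * M)⁻¹ * Mᵀ, by rw [Matrix.mul_assoc, Matrix.nonsing_inv_mul _ h2]⟩

lemma my_min (L : Matrix m n ℝ) (M : Matrix n p ℝ) (h : (L * M).rank = Fintype.card n) :
    L.rank = Fintype.card n ∧
      LinearMap.range L.mulVecLin = LinearMap.range (L * M).mulVecLin := by
  have hle : LinearMap.range (L * M).mulVecLin ≤ LinearMap.range L.mulVecLin := by
    rw [Matrix.mulVecLin_mul]; exact LinearMap.range_comp_le_range _ _
  have h1 : L.rank ≤ Fintype.card n := Matrix.rank_le_card_width L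
  have h2 : Fintype.card n ≤ L.rank := h ▸ Matrix.rank_mul_le_left L M
  refine ⟨le_antisymm h1 h2, ?_⟩
  refine (Submodule.eq_of_le_of_finrank_le hle ?_).symm
  rw [← myrank_def, ← myrank_def, h]
  exact h1

lemma my_factor {L L' : Matrix m n ℝ}
    (hr : LinearMap.range L'.mulVecLin ≤ LinearMap.range L.mulVecLin)
    {B : Matrix n m ℝ} (hB : B * L = 1) : L * (B * L') = L' := by
  apply my_ext_mulVec; intro v
  obtain ⟨y, hy⟩ := hr (LinearMap.mem_range_self _ v)
  have hy' : L *ᵥ y = L' *ᵥ v := hy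
  calc (L * (B * L')) *ᵥ v = L *ᵥ (B *ᵥ (L' *ᵥ v)) := by
        rw [Matrix.mulVec_mulVec, Matrix.mulVec_mulVec, Matrix.mul_assoc]
    _ = L *ᵥ (B *ᵥ (L *ᵥ y)) := by rw [hy']
    _ = (L * (B * L)) *ᵥ y := by rw [Matrix.mulVec_mulVec, Matrix.mulVec_mulVec, Matrix.mul_assoc]
    _ = L *ᵥ y := by rw [hB, Matrix.mul_one]
    _ = L' *ᵥ v := hy'

/-- Combined: if `(L*M)` has rank `card n` and `L' * M' = L * M` (as a factorization
through the same product), then `L' = L * S` with `S` a unit. -/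
lemma my_key {L L' : Matrix m n ℝ} {M M' : Matrix n p ℝ}
    (hA : L * M = L' * M') (h : (L * M).rank = Fintype.card n) :
    ∃ S : Matrix n n ℝ, IsUnit S.det ∧ L * S = L' := by
  obtain ⟨hrkL, hrgL⟩ := my_min L M h
  obtain ⟨hrkL', hrgL'⟩ := my_min L' M' (hA ▸ h)
  obtain ⟨B, hB⟩ := my_exists_left_inv hrkL
  have hfac : L * (B * L') = L' := my_factor (by rw [hrgL', ← hA, ← hrgL]) hB
  refine ⟨B * L', ?_, hfac⟩
  have hrkS : (B * L').rank = Fintype.card n := by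
    refine le_antisymm (Matrix.rank_le_card_width _) ?_
    calc Fintype.card n = L'.rank := hrkL'.symm
      _ = (L * (B * L')).rank := by rw [hfac]
      _ ≤ (B * L').rank := Matrix.rank_mul_le_right _ _
  exact (Matrix.isUnit_iff_isUnit_det _).mp (my_isUnit_of_rank_eq hrkS)

end aux
/-- non-uniqueness of TT representations.  For a representation
`(L, N, R)` with minimal ranks (i.e. `r_L` is the rank of the matricization
`A^{(1)}` and `r_R` the rank of `A^{(1,2)}`), a second triple of the same
dimensions represents the same tensor iff it is obtained by inserting invertible
matrices `T₁, T₂`. -/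
theorem stmt5 (nL nN nR rL rR : ℕ)
    (L : Matrix (Fin nL) (Fin rL) ℝ) (N : Fin nN → Matrix (Fin rL) (Fin rR) ℝ)
    (R : Matrix (Fin rR) (Fin nR) ℝ)
    (hrL : (Matrix.of fun (i : Fin nL) (jk : Fin nN × Fin nR) =>
      (L * N jk.1 * R) i jk.2).rank = rL)
    (hrR : (Matrix.of fun (ij : Fin nL × Fin nN) (k : Fin nR) =>
      (L * N ij.2 * R) ij.1 k).rank = rR)
    (L' : Matrix (Fin nL) (Fin rL) ℝ) (N' : Fin nN → Matrix (Fin rL) (Fin rR) ℝ)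
    (R' : Matrix (Fin rR) (Fin nR) ℝ) :
    (∀ j, L' * N' j * R' = L * N j * R) ↔
      ∃ (T₁ : Matrix (Fin rL) (Fin rL) ℝ) (T₂ : Matrix (Fin rR) (Fin rR) ℝ),
        IsUnit T₁.det ∧ IsUnit T₂.det ∧
        L' = L * T₁⁻¹ ∧ (∀ j, N' j = T₁ * N j * T₂⁻¹) ∧ R' = T₂ * R := by
  constructor
  · intro h
    -- matricization A^{(1)} = L * M = L' * M'
    set M : Matrix (Fin rL) (Fin nN × Fin nR) ℝ :=
      Matrix.of fun a jk => (N jk.1 * R) a jk.2 with hMdef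
    set M' : Matrix (Fin rL) (Fin nN × Fin nR) ℝ :=
      Matrix.of fun a jk => (N' jk.1 * R') a jk.2 with hM'def
    have hA1 : (Matrix.of fun (i : Fin nL) (jk : Fin nN × Fin nR) =>
        (L * N jk.1 * R) i jk.2) = L * M := by
      ext i jk
      rw [Matrix.of_apply, Matrix.mul_assoc]
      simp [M, Matrix.mul_apply]
    have hA1' : (Matrix.of fun (i : Fin nL) (jk : Fin nN × Fin nR) =>
        (L' * N' jk.1 * R') i jk.2) = L' * M' := by
      ext i jk
      rw [Matrix.of_apply, Matrix.mul_assoc]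
      simp [M', Matrix.mul_apply]
    have hsame1 : (Matrix.of fun (i : Fin nL) (jk : Fin nN × Fin nR) =>
        (L' * N' jk.1 * R') i jk.2) = (Matrix.of fun (i : Fin nL) (jk : Fin nN × Fin nR) =>
        (L * N jk.1 * R) i jk.2) := by
      ext i jk; rw [Matrix.of_apply, Matrix.of_apply, h jk.1]
    have hLM : L * M = L' * M' := by rw [← hA1, ← hA1', hsame1]
    have hrank1 : (L * M).rank = Fintype.card (Fin rL) := by
      rw [← hA1, Fintype.card_fin]; exact hrL
    obtain ⟨S, hSdet, hLS⟩ := my_key hLM hrank1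
    -- matricization A^{(1,2)} = P * R = P' * R'
    set P : Matrix (Fin nL × Fin nN) (Fin rR) ℝ :=
      Matrix.of fun ij a => (L * N ij.2) ij.1 a with hPdef
    set P' : Matrix (Fin nL × Fin nN) (Fin rR) ℝ :=
      Matrix.of fun ij a => (L' * N' ij.2) ij.1 a with hP'def
    have hA2 : (Matrix.of fun (ij : Fin nL × Fin nN) (k : Fin nR) =>
        (L * N ij.2 * R) ij.1 k) = P * R := by
      ext ij k
      simp [P, Matrix.mul_apply]
    have hA2' : (Matrix.of fun (ij : Fin nL × Fin nN) (k : Fin nR) =>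
        (L' * N' ij.2 * R') ij.1 k) = P' * R' := by
      ext ij k
      simp [P', Matrix.mul_apply]
    have hsame2 : (Matrix.of fun (ij : Fin nL × Fin nN) (k : Fin nR) =>
        (L' * N' ij.2 * R') ij.1 k) = (Matrix.of fun (ij : Fin nL × Fin nN) (k : Fin nR) =>
        (L * N ij.2 * R) ij.1 k) := by
      ext ij k; rw [Matrix.of_apply, Matrix.of_apply, h ij.2]
    have hLM2 : Rᵀ * Pᵀ = R'ᵀ * P'ᵀ := by
      rw [← Matrix.transpose_mul, ← Matrix.transpose_mul, ← hA2, ← hA2', hsame2]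
    have hrank2 : (Rᵀ * Pᵀ).rank = Fintype.card (Fin rR) := by
      rw [← Matrix.transpose_mul, Matrix.rank_transpose, ← hA2, Fintype.card_fin]; exact hrR
    obtain ⟨S₂, hS₂det, hRS⟩ := my_key hLM2 hrank2
    have hR' : R' = S₂ᵀ * R := by
      have := congrArg Matrix.transpose hRS
      rw [Matrix.transpose_mul, Matrix.transpose_transpose, Matrix.transpose_transpose] at this
      exact this.symm
    -- left inverse of L and right inverse of R
    obtain ⟨hrkL, -⟩ := my_min L M hrank1
    obtain ⟨B, hB⟩ := my_exists_left_inv hrkL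
    obtain ⟨hrkRT, -⟩ := my_min Rᵀ Pᵀ hrank2
    obtain ⟨B₂, hB₂⟩ := my_exists_left_inv hrkRT
    have hC : R * B₂ᵀ = 1 := by
      have := congrArg Matrix.transpose hB₂
      rwa [Matrix.transpose_mul, Matrix.transpose_transpose, Matrix.transpose_one] at this
    -- cancellation: S * N' j * S₂ᵀ = N j
    have hNj : ∀ j, S * N' j * S₂ᵀ = N j := by
      intro j
      have e : L * (S * N' j * S₂ᵀ) * R = L * N j * R := by
        calc L * (S * N' j * S₂ᵀ) * R = (L * S) * N' j * (S₂ᵀ * R) := by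
              simp only [Matrix.mul_assoc]
          _ = L' * N' j * R' := by rw [hLS, ← hR']
          _ = L * N j * R := h j
      have e1 := congrArg (fun X => B * X) e
      simp only [← Matrix.mul_assoc] at e1
      rw [hB, Matrix.one_mul, Matrix.one_mul] at e1
      have e2 := congrArg (fun X => X * B₂ᵀ) e1
      simp only [Matrix.mul_assoc] at e2
      rw [hC, Matrix.mul_one, Matrix.mul_one] at e2
      simp only [← Matrix.mul_assoc] at e2
      exact e2
    have hT2det : IsUnit S₂ᵀ.det := by rwa [Matrix.det_transpose]
    refine ⟨S⁻¹, S₂ᵀ, Matrix.isUnit_nonsing_inv_det _ hSdet, hT2det, ?_, ?_, hR'⟩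
    · rw [Matrix.nonsing_inv_nonsing_inv _ hSdet]; exact hLS.symm
    · intro j
      rw [← hNj j]
      calc N' j = (S⁻¹ * S) * N' j * (S₂ᵀ * S₂ᵀ⁻¹) := by
            rw [Matrix.nonsing_inv_mul _ hSdet, Matrix.mul_nonsing_inv _ hT2det,
              Matrix.one_mul, Matrix.mul_one]
        _ = S⁻¹ * (S * N' j * S₂ᵀ) * S₂ᵀ⁻¹ := by simp only [Matrix.mul_assoc]
  · rintro ⟨T₁, T₂, h1, h2, hL', hN', hR'⟩ j
    rw [hL', hN' j, hR']
    have k1 : T₁⁻¹ * T₁ = 1 := Matrix.nonsing_inv_mul _ h1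
    have k2 : T₂⁻¹ * T₂ = 1 := Matrix.nonsing_inv_mul _ h2
    calc L * T₁⁻¹ * (T₁ * N j * T₂⁻¹) * (T₂ * R)
        = L * (T₁⁻¹ * T₁) * N j * ((T₂⁻¹ * T₂) * R) := by simp only [Matrix.mul_assoc]
      _ = L * N j * R := by rw [k1, k2, Matrix.mul_one, Matrix.one_mul]
end

section
/- Every tensor A ∈ ℝ^{n_L × n_N × n_R} admits a representation A(i,j,k) = (Q_L Σ_L N(j) Σ_R Q_R)_{i,k} such that: Q_L Σ_L, together with the right unfolding of Σ_L N Σ_R Q_R, forms a truncated SVD of the matricization A^{(1)}; the left unfolding of Q_L Σ_L N times Σ_R Q_R forms a truncated SVD of A^{(1,2)}; consequently Q_L has orthonormal columns, Q_R has orthonormal rows, the left unfolding of Σ_L N is column-orthogonal, and the right unfolding of N Σ_R is row-orthogonal. Here Σ_L, Σ_R are the diagonal matrices of nonzero singular values of A^{(1)} and A^{(1,2)} respectively. -/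
open Matrix

/-- Left unfolding of a core `H : Fin n → ℝ^{k₁ × k₂}`: the `(k₁ n) × k₂` matrix
stacking the slices vertically. -/
def lunf {n k1 k2 : ℕ} (H : Fin n → Matrix (Fin k1) (Fin k2) ℝ) :
    Matrix (Fin k1 × Fin n) (Fin k2) ℝ := Matrix.of fun p q => H p.2 p.1 q

/-- Right unfolding of a core: the `k₁ × (n k₂)` matrix stacking the slices
horizontally. -/
def runf {n k1 k2 : ℕ} (H : Fin n → Matrix (Fin k1) (Fin k2) ℝ) :
    Matrix (Fin k1) (Fin n × Fin k2) ℝ := Matrix.of fun l p => H p.1 l p.2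

/-!
Take truncated SVDs `A^{(1)} = Q_L Σ_L V₁ᵀ` and `A^{(1,2)} = U₂ Σ_R V₂ᵀ` (they exist by the
spectral theorem for `Mᵀ M`, keeping only the nonzero eigenvalues), and put `Q_R = V₂ᵀ`,
`N(j) = Σ_L⁻¹ Q_Lᵀ A(:,j,:) Q_Rᵀ Σ_R⁻¹`. The orthogonal projections `Q_L Q_Lᵀ` and `Q_Rᵀ Q_R`
onto the column space of `A^{(1)}` and the row space of `A^{(1,2)}` fix every slice
`A(:,j,:)`; hence `Q_L Σ_L N(j) Σ_R Q_R = A(:,j,:)`, the right unfolding of `N Σ_R Q_R` is `V₁ᵀ`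
and the left unfolding of `Q_L Σ_L N` is `U₂`. Multiplying all slices by `Q_L` on the left
(or by `Q_R` on the right) does not change the Gram matrix of the corresponding unfolding,
which gives the last two orthogonality relations.
-/

lemma Matrix.diagonal_inv_mul_diagonal {k K : Type*} [Fintype k] [DecidableEq k] [DivisionRing K]
    {s : k → K} (hs : ∀ a, s a ≠ 0) : diagonal s⁻¹ * diagonal s = 1 := by
  simp [hs]

lemma Matrix.diagonal_mul_diagonal_inv {k K : Type*} [Fintype k] [DecidableEq k] [DivisionRing K]
    {s : k → K} (hs : ∀ a, s a ≠ 0) : diagonal s * diagonal s⁻¹ = 1 := by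
  simp [hs]

lemma Matrix.submatrix_mul_diagonal_mul_transpose {m n k R : Type*} [Fintype n] [Fintype k]
    [DecidableEq n] [DecidableEq k] [CommSemiring R] (P : Matrix m n R) (d : n → R)
    {f : k → n} (hf : Function.Injective f) (hd : ∀ i ∉ Set.range f, d i = 0) :
    P.submatrix id f * diagonal (d ∘ f) * (P.submatrix id f)ᵀ = P * diagonal d * Pᵀ := by
  ext i j
  rw [mul_apply, mul_apply]
  simp only [mul_diagonal, submatrix_apply, transpose_apply, id, Function.comp_apply]
  exact Fintype.sum_of_injective f hf _ _ (fun x hx => by simp [hd x hx]) fun _ => rfl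

theorem Matrix.PosSemidef.exists_eq_mul_diagonal_mul_transpose {n : Type*} [Fintype n]
    [DecidableEq n] {G : Matrix n n ℝ} (hG : G.PosSemidef) :
    ∃ (r : ℕ) (V : Matrix n (Fin r) ℝ) (d : Fin r → ℝ),
      (∀ a, 0 < d a) ∧ Vᵀ * V = 1 ∧ G = V * diagonal d * Vᵀ := by
  set P : Matrix n n ℝ := (hG.1.eigenvectorUnitary : Matrix n n ℝ)
  have hPP : Pᵀ * P = 1 := by
    simpa [P, star_eq_conjTranspose] using
      Matrix.mem_unitaryGroup_iff'.mp hG.1.eigenvectorUnitary.2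
  have hG_eq : G = P * diagonal hG.1.eigenvalues * Pᵀ := by
    simpa [P, Unitary.conjStarAlgAut_apply, star_eq_conjTranspose] using hG.1.spectral_theorem
  let e := (Fintype.equivFin {i // hG.1.eigenvalues i ≠ 0}).symm
  let f : Fin _ → n := Subtype.val ∘ e
  have hf : Function.Injective f := Subtype.val_injective.comp e.injective
  refine ⟨_, P.submatrix id f, hG.1.eigenvalues ∘ f,
    fun a => (hG.eigenvalues_nonneg _).lt_of_ne' (e a).2, ?_, ?_⟩
  · rw [transpose_submatrix, ← submatrix_mul _ _ _ _ _ Function.bijective_id, hPP,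
      submatrix_one _ hf]
  · refine hG_eq.trans (submatrix_mul_diagonal_mul_transpose _ _ hf fun i hi => ?_).symm
    by_contra h
    exact hi ⟨e.symm ⟨i, h⟩, by simp [f]⟩

structure IsTruncatedSVD {m n k : Type*} [Fintype m] [Fintype n] [Fintype k] [DecidableEq k]
    (M : Matrix m n ℝ) (U : Matrix m k ℝ) (s : k → ℝ) (V : Matrix n k ℝ) : Prop where
  pos : ∀ a, 0 < s a
  orthonormal_left : Uᵀ * U = 1
  orthonormal_right : Vᵀ * V = 1
  eq : M = U * diagonal s * Vᵀ

namespace IsTruncatedSVD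

variable {m n k : Type*} [Fintype m] [Fintype n] [Fintype k] [DecidableEq k]
  {M : Matrix m n ℝ} {U : Matrix m k ℝ} {s : k → ℝ} {V : Matrix n k ℝ}

lemma mul_transpose_mul_eq (h : IsTruncatedSVD M U s V) : U * Uᵀ * M = M := by
  rw [h.eq]
  simp only [← Matrix.mul_assoc]
  rw [Matrix.mul_assoc U Uᵀ U, h.orthonormal_left, Matrix.mul_one]

lemma mul_mul_transpose_eq (h : IsTruncatedSVD M U s V) : M * V * Vᵀ = M := by
  rw [h.eq, Matrix.mul_assoc (U * diagonal s) Vᵀ V, h.orthonormal_right, Matrix.mul_one]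

lemma mul_mul_diagonal_inv (h : IsTruncatedSVD M U s V) : M * V * diagonal s⁻¹ = U := by
  rw [h.eq, Matrix.mul_assoc (U * diagonal s) Vᵀ V, h.orthonormal_right, Matrix.mul_one,
    Matrix.mul_assoc, diagonal_mul_diagonal_inv fun a => (h.pos a).ne', Matrix.mul_one]

lemma diagonal_inv_mul_transpose_mul (h : IsTruncatedSVD M U s V) :
    diagonal s⁻¹ * Uᵀ * M = Vᵀ := by
  rw [h.eq]
  simp only [← Matrix.mul_assoc]
  rw [Matrix.mul_assoc _ Uᵀ U, h.orthonormal_left, Matrix.mul_one,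
    diagonal_inv_mul_diagonal fun a => (h.pos a).ne', Matrix.one_mul]

end IsTruncatedSVD

theorem exists_isTruncatedSVD {m n : Type*} [Fintype m] [Fintype n] [DecidableEq n]
    (M : Matrix m n ℝ) :
    ∃ (r : ℕ) (U : Matrix m (Fin r) ℝ) (s : Fin r → ℝ) (V : Matrix n (Fin r) ℝ),
      IsTruncatedSVD M U s V := by
  obtain ⟨r, V, d, hd, hV, hG⟩ :=
    (posSemidef_conjTranspose_mul_self M).exists_eq_mul_diagonal_mul_transpose
  set s : Fin r → ℝ := fun a => √(d a)
  have hs : ∀ a, 0 < s a := fun a => Real.sqrt_pos.mpr (hd a)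
  have hss : ∀ a, s a * s a = d a := fun a => Real.mul_self_sqrt (hd a).le
  have hsds : diagonal s⁻¹ * diagonal d * diagonal s⁻¹ = 1 := by
    rw [← diagonal_one, diagonal_mul_diagonal, diagonal_mul_diagonal]
    congr 1
    funext a
    rw [Pi.inv_apply, ← hss a]
    field_simp [(hs a).ne']
  -- `Mᵀ M` kills `1 - V Vᵀ`, hence so does `M`
  have hMVV : M * V * Vᵀ = M := by
    have hker : Mᴴ * M * (1 - V * Vᵀ) = 0 := by
      rw [hG, Matrix.mul_sub, Matrix.mul_one, sub_eq_zero, Matrix.mul_assoc _ Vᵀ,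
        ← Matrix.mul_assoc Vᵀ V, hV, Matrix.one_mul]
    rw [conjTranspose_mul_self_mul_eq_zero, Matrix.mul_sub, Matrix.mul_one, sub_eq_zero] at hker
    rw [Matrix.mul_assoc, ← hker]
  refine ⟨r, M * V * diagonal s⁻¹, s, V, hs, ?_, hV, ?_⟩
  · rw [conjTranspose_eq_transpose_of_trivial] at hG
    calc (M * V * diagonal s⁻¹)ᵀ * (M * V * diagonal s⁻¹)
        = diagonal s⁻¹ * (Vᵀ * (Mᵀ * M) * V) * diagonal s⁻¹ := by
          simp only [transpose_mul, diagonal_transpose, Matrix.mul_assoc]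
      _ = diagonal s⁻¹ * (Vᵀ * V * diagonal d * (Vᵀ * V)) * diagonal s⁻¹ := by
          simp only [hG, Matrix.mul_assoc]
      _ = 1 := by rw [hV, Matrix.one_mul, Matrix.mul_one, hsds]
  · rw [Matrix.mul_assoc (M * V), diagonal_inv_mul_diagonal fun a => (hs a).ne', Matrix.mul_one,
      hMVV]

section Unfolding

variable {n k₁ k₂ : ℕ}

lemma runf_injective :
    Function.Injective (runf : (Fin n → Matrix (Fin k₁) (Fin k₂) ℝ) → _) :=
  fun _ _ h => funext fun j => Matrix.ext fun l q => congrFun₂ h l (j, q)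

lemma lunf_injective :
    Function.Injective (lunf : (Fin n → Matrix (Fin k₁) (Fin k₂) ℝ) → _) :=
  fun _ _ h => funext fun j => Matrix.ext fun l q => congrFun₂ h (l, j) q

lemma runf_mul_left {p : ℕ} (B : Matrix (Fin p) (Fin k₁) ℝ)
    (H : Fin n → Matrix (Fin k₁) (Fin k₂) ℝ) :
    runf (fun j => B * H j) = B * runf H := by
  ext l q
  simp [runf, mul_apply]

lemma lunf_mul_right {p : ℕ} (H : Fin n → Matrix (Fin k₁) (Fin k₂) ℝ)
    (B : Matrix (Fin k₂) (Fin p) ℝ) :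
    lunf (fun j => H j * B) = lunf H * B := by
  ext q l
  simp [lunf, mul_apply]

lemma transpose_lunf_mul_lunf (H : Fin n → Matrix (Fin k₁) (Fin k₂) ℝ) :
    (lunf H)ᵀ * lunf H = ∑ j, (H j)ᵀ * H j := by
  ext a b
  simp only [mul_apply, transpose_apply, lunf, of_apply, Matrix.sum_apply, Fintype.sum_prod_type]
  exact Finset.sum_comm

lemma runf_mul_transpose_runf (H : Fin n → Matrix (Fin k₁) (Fin k₂) ℝ) :
    runf H * (runf H)ᵀ = ∑ j, H j * (H j)ᵀ := by
  ext a b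
  simp only [mul_apply, transpose_apply, runf, of_apply, Matrix.sum_apply, Fintype.sum_prod_type]

lemma transpose_lunf_mul_lunf_mul_left {p : ℕ} {Q : Matrix (Fin p) (Fin k₁) ℝ}
    (hQ : Qᵀ * Q = 1) (H : Fin n → Matrix (Fin k₁) (Fin k₂) ℝ) :
    (lunf fun j => Q * H j)ᵀ * lunf (fun j => Q * H j) = (lunf H)ᵀ * lunf H := by
  simp only [transpose_lunf_mul_lunf, transpose_mul, Matrix.mul_assoc, ← Matrix.mul_assoc Qᵀ Q,
    hQ, Matrix.one_mul]

lemma runf_mul_transpose_runf_mul_right {p : ℕ} {Q : Matrix (Fin k₂) (Fin p) ℝ}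
    (hQ : Q * Qᵀ = 1) (H : Fin n → Matrix (Fin k₁) (Fin k₂) ℝ) :
    (runf fun j => H j * Q) * (runf fun j => H j * Q)ᵀ = runf H * (runf H)ᵀ := by
  simp only [runf_mul_transpose_runf, transpose_mul, Matrix.mul_assoc, ← Matrix.mul_assoc Q Qᵀ,
    hQ, Matrix.one_mul]

end Unfolding

noncomputable def stdCore {nL nN nR rL rR : ℕ} (QL : Matrix (Fin nL) (Fin rL) ℝ) (sL : Fin rL → ℝ)
    (V₂ : Matrix (Fin nR) (Fin rR) ℝ) (sR : Fin rR → ℝ)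
    (H : Fin nN → Matrix (Fin nL) (Fin nR) ℝ) (j : Fin nN) : Matrix (Fin rL) (Fin rR) ℝ :=
  diagonal sL⁻¹ * QLᵀ * H j * V₂ * diagonal sR⁻¹

section StdCore

variable {nL nN nR rL rR : ℕ} {H : Fin nN → Matrix (Fin nL) (Fin nR) ℝ}
  {QL : Matrix (Fin nL) (Fin rL) ℝ} {sL : Fin rL → ℝ} {V₁ : Matrix (Fin nN × Fin nR) (Fin rL) ℝ}
  {U₂ : Matrix (Fin nL × Fin nN) (Fin rR) ℝ} {sR : Fin rR → ℝ} {V₂ : Matrix (Fin nR) (Fin rR) ℝ}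

lemma mul_transpose_mul_slice (h₁ : IsTruncatedSVD (runf H) QL sL V₁) (j : Fin nN) :
    QL * QLᵀ * H j = H j := by
  have h : runf (fun j => QL * QLᵀ * H j) = runf H := by
    rw [runf_mul_left]
    exact h₁.mul_transpose_mul_eq
  exact congrFun (runf_injective h) j

lemma slice_mul_mul_transpose (h₂ : IsTruncatedSVD (lunf H) U₂ sR V₂) (j : Fin nN) :
    H j * V₂ * V₂ᵀ = H j := by
  have h : lunf (fun j => H j * V₂ * V₂ᵀ) = lunf H := by
    rw [lunf_mul_right, lunf_mul_right]
    exact h₂.mul_mul_transpose_eq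
  exact congrFun (lunf_injective h) j

lemma mul_diagonal_mul_stdCore (h₁ : IsTruncatedSVD (runf H) QL sL V₁) (j : Fin nN) :
    QL * diagonal sL * stdCore QL sL V₂ sR H j = H j * V₂ * diagonal sR⁻¹ := by
  simp only [stdCore, ← Matrix.mul_assoc]
  rw [Matrix.mul_assoc QL, diagonal_mul_diagonal_inv fun a => (h₁.pos a).ne', Matrix.mul_one,
    mul_transpose_mul_slice h₁]

lemma stdCore_mul_diagonal_mul (h₂ : IsTruncatedSVD (lunf H) U₂ sR V₂) (j : Fin nN) :
    stdCore QL sL V₂ sR H j * diagonal sR * V₂ᵀ = diagonal sL⁻¹ * QLᵀ * H j := by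
  simp only [stdCore, Matrix.mul_assoc]
  rw [← Matrix.mul_assoc (diagonal sR⁻¹), diagonal_inv_mul_diagonal fun b => (h₂.pos b).ne',
    Matrix.one_mul, ← Matrix.mul_assoc (H j), slice_mul_mul_transpose h₂]

lemma slice_eq_mul_stdCore_mul (h₁ : IsTruncatedSVD (runf H) QL sL V₁)
    (h₂ : IsTruncatedSVD (lunf H) U₂ sR V₂) (j : Fin nN) :
    H j = QL * diagonal sL * stdCore QL sL V₂ sR H j * diagonal sR * V₂ᵀ := by
  rw [mul_diagonal_mul_stdCore h₁, Matrix.mul_assoc (H j * V₂),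
    diagonal_inv_mul_diagonal fun b => (h₂.pos b).ne', Matrix.mul_one, slice_mul_mul_transpose h₂]

lemma runf_stdCore_mul_diagonal_mul (h₁ : IsTruncatedSVD (runf H) QL sL V₁)
    (h₂ : IsTruncatedSVD (lunf H) U₂ sR V₂) :
    runf (fun j => stdCore QL sL V₂ sR H j * diagonal sR * V₂ᵀ) = V₁ᵀ := by
  simp only [stdCore_mul_diagonal_mul h₂]
  rw [runf_mul_left]
  exact h₁.diagonal_inv_mul_transpose_mul

lemma lunf_mul_diagonal_mul_stdCore (h₁ : IsTruncatedSVD (runf H) QL sL V₁)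
    (h₂ : IsTruncatedSVD (lunf H) U₂ sR V₂) :
    lunf (fun j => QL * diagonal sL * stdCore QL sL V₂ sR H j) = U₂ := by
  simp only [mul_diagonal_mul_stdCore h₁]
  rw [lunf_mul_right, lunf_mul_right]
  exact h₂.mul_mul_diagonal_inv

end StdCore

/-- existence of the standard representation
`A(i,j,k) = (Q_L Σ_L N(j) Σ_R Q_R)_{i,k}` whose two induced factorizations are
truncated SVDs of `A^{(1)}` and `A^{(1,2)}`, with the asserted orthogonality
properties and positive diagonal singular values. -/
theorem stmt6 (nL nN nR : ℕ) (A : Fin nL → Fin nN → Fin nR → ℝ) :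
    ∃ (rL rR : ℕ) (QL : Matrix (Fin nL) (Fin rL) ℝ) (sL : Fin rL → ℝ)
      (N : Fin nN → Matrix (Fin rL) (Fin rR) ℝ) (sR : Fin rR → ℝ)
      (QR : Matrix (Fin rR) (Fin nR) ℝ),
      (∀ a, 0 < sL a) ∧ (∀ b, 0 < sR b) ∧
      (∀ i j k, A i j k =
        (QL * Matrix.diagonal sL * N j * Matrix.diagonal sR * QR) i k) ∧
      -- truncated SVD of the matricization A^{(1)}
      ((Matrix.of fun (i : Fin nL) (p : Fin nN × Fin nR) => A i p.1 p.2) =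
        QL * Matrix.diagonal sL * runf (fun j => N j * Matrix.diagonal sR * QR)) ∧
      QLᵀ * QL = 1 ∧
      (runf fun j => N j * Matrix.diagonal sR * QR) *
        (runf fun j => N j * Matrix.diagonal sR * QR)ᵀ = 1 ∧
      -- truncated SVD of the matricization A^{(1,2)}
      ((Matrix.of fun (p : Fin nL × Fin nN) (k : Fin nR) => A p.1 p.2 k) =
        lunf (fun j => QL * Matrix.diagonal sL * N j) * Matrix.diagonal sR * QR) ∧
      (lunf fun j => QL * Matrix.diagonal sL * N j)ᵀ *
        (lunf fun j => QL * Matrix.diagonal sL * N j) = 1 ∧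
      QR * QRᵀ = 1 ∧
      -- consequently: left unfolding of Σ_L N is column-orthogonal,
      -- right unfolding of N Σ_R is row-orthogonal
      (lunf fun j => Matrix.diagonal sL * N j)ᵀ *
        (lunf fun j => Matrix.diagonal sL * N j) = 1 ∧
      (runf fun j => N j * Matrix.diagonal sR) *
        (runf fun j => N j * Matrix.diagonal sR)ᵀ = 1 := by
  set H : Fin nN → Matrix (Fin nL) (Fin nR) ℝ := fun j => of fun i k => A i j k
  obtain ⟨rL, QL, sL, V₁, h₁⟩ := exists_isTruncatedSVD (runf H)
  obtain ⟨rR, U₂, sR, V₂, h₂⟩ := exists_isTruncatedSVD (lunf H)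
  have hrunf := runf_stdCore_mul_diagonal_mul h₁ h₂
  have hlunf := lunf_mul_diagonal_mul_stdCore h₁ h₂
  have hQR : V₂ᵀ * V₂ᵀᵀ = 1 := by rw [transpose_transpose]; exact h₂.orthonormal_right
  have hrunf_orth : (runf fun j => stdCore QL sL V₂ sR H j * diagonal sR * V₂ᵀ) *
      (runf fun j => stdCore QL sL V₂ sR H j * diagonal sR * V₂ᵀ)ᵀ = 1 := by
    rw [hrunf, transpose_transpose]
    exact h₁.orthonormal_right
  refine ⟨rL, rR, QL, sL, stdCore QL sL V₂ sR H, sR, V₂ᵀ, h₁.pos, h₂.pos,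
    fun i j k => congrFun₂ (slice_eq_mul_stdCore_mul h₁ h₂ j) i k, hrunf ▸ h₁.eq,
    h₁.orthonormal_left, hrunf_orth, hlunf ▸ h₂.eq, hlunf ▸ h₂.orthonormal_left, hQR, ?_,
    (runf_mul_transpose_runf_mul_right hQR _).symm.trans hrunf_orth⟩
  rw [← transpose_lunf_mul_lunf_mul_left h₁.orthonormal_left]
  simp only [← Matrix.mul_assoc]
  rw [hlunf]
  exact h₂.orthonormal_left
end

section
/- In the setting of the previous lemma (orthonormal u₁, u₂, Σ = diag(σ₁,σ₂), 0 < ω < √2 σ₂, α = ω²/(2σ₂²), target M ∈ ℝ^{m×m}): the minimizer over Ṽ ∈ ℝ^{2×m} of the averaged least-squares functional (1/|V_ω|)∫_{V_ω} ‖(u₁ | u₂+Δu₂) Ṽ − M‖²_F dΔu₂ is Ṽ = (u₁ᵀM ; (1−α)u₂ᵀM) (first row u₁ᵀM, second row (1−α)u₂ᵀM). -/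
/-!
For `Δ ∈ V_ω` the columns of `U = (u₁ | u₂ + Δ)` are orthonormal, so for every `W₀`
`‖U W - M‖² = ‖U W₀ - M‖² + ‖W - W₀‖² - 2 tr((W - W₀)ᵀ (Uᵀ M - W₀))`.
Take `W₀ = (u₁ | (1 - α) u₂)ᵀ M`, the claimed minimiser. Then `Uᵀ M - W₀ = (0 | Δ + α u₂)ᵀ M`, and
`⟪u₂, Δ⟫ = -α` on `V_ω`. The reflection in the line `ℝ u₂` is an isometry, so it preserves the
Hausdorff measure; it maps `V_ω` onto itself and negates `Δ + α u₂` there. Hence the cross term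
averages to zero over `V_ω`, and the average error at `W` exceeds that at `W₀` by `‖W - W₀‖² ≥ 0`.
-/

open Matrix MeasureTheory

noncomputable section

/-- The `m × 2` matrix `(u | v)` with columns `u` and `v`. -/
def colcat {m : ℕ} (u v : EuclideanSpace ℝ (Fin m)) : Matrix (Fin m) (Fin 2) ℝ :=
  Matrix.of fun i c => if c = 0 then u i else v i

/-- Squared Frobenius norm. -/
def frobSq {a b : Type*} [Fintype a] [Fintype b] (M : Matrix a b ℝ) : ℝ :=
  ∑ i, ∑ j, (M i j) ^ 2

open scoped RealInnerProductSpace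

theorem setIntegral_hausdorffMeasure_eq_zero_of_odd {X E : Type*} [EMetricSpace X]
    [MeasurableSpace X] [BorelSpace X] [NormedAddCommGroup E] [NormedSpace ℝ E] (d : ℝ)
    (e : X ≃ᵢ X) {s : Set X} (hs : MeasurableSet s) (hes : e ⁻¹' s = s) {f : X → E}
    (hf : ∀ x ∈ s, f (e x) = -f x) : ∫ x in s, f x ∂μH[d] = 0 := by
  have h : ∫ x in s, f x ∂μH[d] = ∫ x in s, f (e x) ∂μH[d] := by
    rw [← (e.measurePreserving_hausdorffMeasure d).setIntegral_preimage_emb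
      e.toHomeomorph.measurableEmbedding f s, hes]
  rw [setIntegral_congr_fun hs hf, integral_neg] at h
  have := IsAddTorsionFree.of_isTorsionFree ℝ E
  exact self_eq_neg.mp h

theorem setAverage_le_of_eq_add_of_integral_eq_zero {X : Type*} [TopologicalSpace X]
    [T2Space X] [MeasurableSpace X] [OpensMeasurableSpace X] {μ : Measure X} {s : Set X}
    (hs : IsCompact s) {g h k : X → ℝ} (hh : ContinuousOn h s) (hk : ContinuousOn k s)
    (hk₀ : ∫ x in s, k x ∂μ = 0) {c : ℝ} (hc : 0 ≤ c) (hg : ∀ x ∈ s, g x = h x + c + k x) :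
    1 / (μ s).toReal * ∫ x in s, h x ∂μ ≤ 1 / (μ s).toReal * ∫ x in s, g x ∂μ := by
  by_cases hμ : μ s = ⊤
  · simp [hμ]
  have integrable {f : X → ℝ} (hf : ContinuousOn f s) : IntegrableOn f s μ :=
    hf.integrableOn_of_subset_isCompact hs hs.measurableSet subset_rfl hμ
  have hint : ∫ x in s, g x ∂μ = ∫ x in s, h x ∂μ + (μ s).toReal * c := by
    rw [setIntegral_congr_fun hs.measurableSet hg, integral_add _ (integrable hk),
      integral_add (integrable hh) (integrable continuousOn_const), hk₀, setIntegral_const,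
      smul_eq_mul, measureReal_def, add_zero]
    exact (integrable hh).add (integrable continuousOn_const)
  rw [hint, mul_add, ← mul_assoc]
  have : 0 ≤ 1 / (μ s).toReal * (μ s).toReal * c := by positivity
  linarith

section Reflection

variable {E : Type*} [NormedAddCommGroup E] [InnerProductSpace ℝ E]

theorem inner_reflection_span_singleton_of_inner_eq_zero {u v : E} (h : ⟪u, v⟫ = 0) (x : E) :
    ⟪u, (ℝ ∙ v).reflection x⟫ = -⟪u, x⟫ := by
  have hu : (ℝ ∙ v).reflection u = -u :=
    Submodule.reflection_mem_subspace_orthogonalComplement_eq_neg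
      (Submodule.mem_orthogonal_singleton_iff_inner_left.mpr h)
  rw [← (ℝ ∙ v).reflection.inner_map_map, Submodule.reflection_reflection, hu, inner_neg_left]

theorem reflection_span_singleton_add_smul {u x : E} (hu : ‖u‖ = 1) {a : ℝ}
    (h : ⟪u, x⟫ = -a) : (ℝ ∙ u).reflection x + a • u = -(x + a • u) := by
  have hfix : (ℝ ∙ u).reflection u = u :=
    Submodule.reflection_mem_subspace_eq_self (Submodule.mem_span_singleton_self u)
  have horth : ⟪u, x + a • u⟫ = 0 := by
    rw [inner_add_right, inner_smul_right, real_inner_self_eq_norm_sq, hu, h]; ring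
  calc (ℝ ∙ u).reflection x + a • u = (ℝ ∙ u).reflection (x + a • u) := by
        rw [map_add, map_smul, hfix]
    _ = -(x + a • u) := Submodule.reflection_mem_subspace_orthogonalComplement_eq_neg
        (Submodule.mem_orthogonal_singleton_iff_inner_right.mpr horth)

theorem inner_eq_neg_half_norm_sq_of_norm_add {u x : E} (hu : ‖u‖ = 1) (h : ‖u + x‖ = 1) :
    ⟪u, x⟫ = -(‖x‖ ^ 2 / 2) := by
  have := norm_add_sq_real u x
  rw [h, hu] at this
  linarith

end Reflection

section Frobenius

variable {n k l : Type*} [Fintype n] [Fintype k] [Fintype l]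

theorem frobSq_nonneg (A : Matrix n k ℝ) : 0 ≤ frobSq A := by
  unfold frobSq; positivity

@[fun_prop]
theorem continuous_frobSq : Continuous (frobSq : Matrix n k ℝ → ℝ) := by
  unfold frobSq; fun_prop

theorem frobSq_eq_trace (A : Matrix n k ℝ) : frobSq A = trace (Aᵀ * A) := by
  simp only [frobSq, trace, diag, mul_apply, transpose_apply, sq]
  exact Finset.sum_comm

theorem trace_transpose_mul_comm (A B : Matrix n k ℝ) : trace (Aᵀ * B) = trace (Bᵀ * A) := by
  rw [← trace_transpose, transpose_mul, transpose_transpose]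

theorem frobSq_mul_sub [DecidableEq k] {U : Matrix n k ℝ} (hU : Uᵀ * U = 1)
    (W W' : Matrix k l ℝ) (M : Matrix n l ℝ) :
    frobSq (U * W - M) =
      frobSq (U * W' - M) + frobSq (W - W') - 2 * trace ((W - W')ᵀ * (Uᵀ * M - W')) := by
  have hM (X : Matrix k l ℝ) : trace (Mᵀ * (U * X)) = trace (Xᵀ * (Uᵀ * M)) := by
    rw [trace_transpose_mul_comm, transpose_mul, Matrix.mul_assoc]
  simp only [frobSq_eq_trace, transpose_sub, transpose_mul, Matrix.sub_mul, Matrix.mul_sub,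
    trace_sub, Matrix.mul_assoc, ← Matrix.mul_assoc Uᵀ U, hU, Matrix.one_mul, hM]
  rw [trace_transpose_mul_comm W' W]
  ring

end Frobenius

section Colcat

variable {m : ℕ}

@[fun_prop]
theorem continuous_colcat (u : EuclideanSpace ℝ (Fin m)) : Continuous (colcat u) := by
  refine continuous_pi fun i => continuous_pi fun c => ?_
  by_cases hc : c = 0 <;> simp only [colcat, of_apply, hc, if_true, if_false] <;> fun_prop

theorem colcat_sub_colcat (u v w : EuclideanSpace ℝ (Fin m)) :
    colcat u v - colcat u w = colcat 0 (v - w) := by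
  ext i c
  by_cases hc : c = 0 <;> simp [colcat, hc]

theorem colcat_zero_neg (v : EuclideanSpace ℝ (Fin m)) : colcat 0 (-v) = -colcat 0 v := by
  ext i c
  by_cases hc : c = 0 <;> simp [colcat, hc]

theorem colcat_smul_transpose_mul (u v : EuclideanSpace ℝ (Fin m)) (a : ℝ)
    (M : Matrix (Fin m) (Fin m) ℝ) :
    (colcat u (a • v))ᵀ * M =
      of fun c j => if c = 0 then ∑ i, u i * M i j else a * ∑ i, v i * M i j := by
  ext c j
  by_cases hc : c = 0 <;> simp [colcat, hc, mul_apply, Finset.mul_sum, mul_assoc]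

theorem colcat_transpose_mul_self_apply (u v : EuclideanSpace ℝ (Fin m)) (c c' : Fin 2) :
    ((colcat u v)ᵀ * colcat u v) c c' = ⟪![u, v] c, ![u, v] c'⟫ := by
  rw [PiLp.inner_apply]
  fin_cases c <;> fin_cases c' <;> simp [colcat, mul_apply, mul_comm, sq]

theorem colcat_transpose_mul_self_eq_one_iff (u v : EuclideanSpace ℝ (Fin m)) :
    (colcat u v)ᵀ * colcat u v = 1 ↔ ‖u‖ = 1 ∧ ⟪u, v⟫ = 0 ∧ ‖v‖ = 1 := by
  rw [← Matrix.ext_iff]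
  simp [colcat_transpose_mul_self_apply, one_apply, Fin.forall_fin_two, real_inner_comm v u,
    pow_eq_one_iff_of_nonneg (norm_nonneg _)]
  tauto

theorem frobSq_colcat_mul_sub {u v : EuclideanSpace ℝ (Fin m)}
    (hU : (colcat u v)ᵀ * colcat u v = 1) (w : EuclideanSpace ℝ (Fin m))
    (W : Matrix (Fin 2) (Fin m) ℝ) (M : Matrix (Fin m) (Fin m) ℝ) :
    frobSq (colcat u v * W - M) =
      frobSq (colcat u v * ((colcat u w)ᵀ * M) - M) + frobSq (W - (colcat u w)ᵀ * M) +
        -2 * trace ((W - (colcat u w)ᵀ * M)ᵀ * ((colcat 0 (v - w))ᵀ * M)) := by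
  rw [frobSq_mul_sub hU W ((colcat u w)ᵀ * M), ← Matrix.sub_mul, ← transpose_sub,
    colcat_sub_colcat]
  ring

end Colcat

section Perturbations

variable {m : ℕ} (u₁ u₂ : EuclideanSpace ℝ (Fin m)) (σ ω : ℝ)

/-- The paper's `V_ω`, with `σ` in the role of `σ₂`. -/
def orthonormalPerturbations : Set (EuclideanSpace ℝ (Fin m)) :=
  {Δ | ‖Δ‖ * σ = ω ∧ (colcat u₁ (u₂ + Δ))ᵀ * colcat u₁ (u₂ + Δ) = 1}

theorem isCompact_orthonormalPerturbations :
    IsCompact (orthonormalPerturbations u₁ u₂ σ ω) := by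
  have hclosed : IsClosed (orthonormalPerturbations u₁ u₂ σ ω) :=
    (isClosed_eq (by fun_prop) continuous_const).inter (isClosed_eq (by fun_prop) continuous_const)
  refine Metric.isCompact_of_isClosed_isBounded hclosed
    ((Metric.isBounded_closedBall (x := 0) (r := 1 + ‖u₂‖)).subset fun Δ hΔ => ?_)
  have hv : ‖u₂ + Δ‖ = 1 := ((colcat_transpose_mul_self_eq_one_iff _ _).mp hΔ.2).2.2
  rw [mem_closedBall_zero_iff, ← hv]
  calc ‖Δ‖ = ‖(u₂ + Δ) - u₂‖ := by rw [add_sub_cancel_left]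
    _ ≤ ‖u₂ + Δ‖ + ‖u₂‖ := norm_sub_le _ _

theorem reflection_preimage_orthonormalPerturbations (h : ⟪u₁, u₂⟫ = 0) :
    (ℝ ∙ u₂).reflection ⁻¹' orthonormalPerturbations u₁ u₂ σ ω =
      orthonormalPerturbations u₁ u₂ σ ω := by
  have hfix : (ℝ ∙ u₂).reflection u₂ = u₂ :=
    Submodule.reflection_mem_subspace_eq_self (Submodule.mem_span_singleton_self u₂)
  have hshift (Δ) : u₂ + (ℝ ∙ u₂).reflection Δ = (ℝ ∙ u₂).reflection (u₂ + Δ) := by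
    rw [map_add, hfix]
  ext Δ
  simp only [orthonormalPerturbations, Set.mem_preimage, Set.mem_ofPred_eq,
    colcat_transpose_mul_self_eq_one_iff, hshift, LinearIsometryEquiv.norm_map,
    inner_reflection_span_singleton_of_inner_eq_zero h, neg_eq_zero]

theorem inner_of_mem_orthonormalPerturbations (hu₂ : ‖u₂‖ = 1) (hσ : σ ≠ 0)
    {Δ : EuclideanSpace ℝ (Fin m)} (hΔ : Δ ∈ orthonormalPerturbations u₁ u₂ σ ω) :
    ⟪u₂, Δ⟫ = -(ω ^ 2 / (2 * σ ^ 2)) := by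
  obtain ⟨hnorm, hU⟩ := hΔ
  rw [inner_eq_neg_half_norm_sq_of_norm_add hu₂
    ((colcat_transpose_mul_self_eq_one_iff _ _).mp hU).2.2, ← hnorm]
  field_simp

end Perturbations

theorem stmt12_general (m : ℕ) (u₁ u₂ : EuclideanSpace ℝ (Fin m))
    (hU : (colcat u₁ u₂)ᵀ * colcat u₁ u₂ = 1)
    (σ₂ : ℝ) (hσ₂ : 0 < σ₂) (M : Matrix (Fin m) (Fin m) ℝ)
    (ω : ℝ) :
    let α : ℝ := ω ^ 2 / (2 * σ₂ ^ 2)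
    let Vω : Set (EuclideanSpace ℝ (Fin m)) :=
      {Δ | ‖Δ‖ * σ₂ = ω ∧ (colcat u₁ (u₂ + Δ))ᵀ * colcat u₁ (u₂ + Δ) = 1}
    let F : Matrix (Fin 2) (Fin m) ℝ → ℝ := fun W =>
      (1 / (μH[(m : ℝ) - 3] Vω).toReal) *
        ∫ Δ in Vω, frobSq (colcat u₁ (u₂ + Δ) * W - M) ∂(μH[(m : ℝ) - 3])
    ∀ W : Matrix (Fin 2) (Fin m) ℝ,
      F (Matrix.of fun c j => if c = 0 then ∑ i, u₁ i * M i j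
          else (1 - α) * ∑ i, u₂ i * M i j) ≤ F W := by
  intro α V F W
  obtain ⟨-, hu₁₂, hu₂⟩ := (colcat_transpose_mul_self_eq_one_iff u₁ u₂).mp hU
  set W₀ := (colcat u₁ ((1 - α) • u₂))ᵀ * M
  set cross := fun Δ => -2 * trace ((W - W₀)ᵀ * ((colcat 0 (Δ + α • u₂))ᵀ * M))
  have hcross_odd (Δ) (hΔ : Δ ∈ V) : cross ((ℝ ∙ u₂).reflection Δ) = -cross Δ := by
    simp only [cross, reflection_span_singleton_add_smul (a := α) hu₂
      (inner_of_mem_orthonormalPerturbations u₁ u₂ σ₂ ω hu₂ hσ₂.ne' hΔ), colcat_zero_neg,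
      transpose_neg, Matrix.neg_mul, Matrix.mul_neg, trace_neg]
    ring
  rw [← colcat_smul_transpose_mul]
  refine setAverage_le_of_eq_add_of_integral_eq_zero
    (isCompact_orthonormalPerturbations u₁ u₂ σ₂ ω) (by fun_prop) (by fun_prop)
    (setIntegral_hausdorffMeasure_eq_zero_of_odd _ (ℝ ∙ u₂).reflection.toIsometryEquiv
      (isCompact_orthonormalPerturbations u₁ u₂ σ₂ ω).measurableSet
      (reflection_preimage_orthonormalPerturbations u₁ u₂ σ₂ ω hu₁₂) hcross_odd)
    (frobSq_nonneg (W - W₀)) fun Δ hΔ => ?_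
  rw [frobSq_colcat_mul_sub hΔ.2, show u₂ + Δ - (1 - α) • u₂ = Δ + α • u₂ by module]

/-- the minimizer of the averaged least-squares functional
`Ṽ ↦ (1/|V_ω|)∫_{V_ω} ‖(u₁ | u₂+Δu₂) Ṽ − M‖²_F` is the matrix with rows
`u₁ᵀM` and `(1−α) u₂ᵀM`. -/
theorem stmt12 (m : ℕ) (hm : 3 ≤ m) (u₁ u₂ : EuclideanSpace ℝ (Fin m))
    (hU : (colcat u₁ u₂)ᵀ * colcat u₁ u₂ = 1)
    (σ₂ : ℝ) (hσ₂ : 0 < σ₂) (M : Matrix (Fin m) (Fin m) ℝ)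
    (ω : ℝ) (hω0 : 0 < ω) (hωlt : ω < Real.sqrt 2 * σ₂) :
    let α : ℝ := ω ^ 2 / (2 * σ₂ ^ 2)
    let Vω : Set (EuclideanSpace ℝ (Fin m)) :=
      {Δ | ‖Δ‖ * σ₂ = ω ∧ (colcat u₁ (u₂ + Δ))ᵀ * colcat u₁ (u₂ + Δ) = 1}
    let F : Matrix (Fin 2) (Fin m) ℝ → ℝ := fun W =>
      (1 / (μH[(m : ℝ) - 3] Vω).toReal) *
        ∫ Δ in Vω, frobSq (colcat u₁ (u₂ + Δ) * W - M) ∂(μH[(m : ℝ) - 3])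
    ∀ W : Matrix (Fin 2) (Fin m) ℝ,
      F (Matrix.of fun c j => if c = 0 then ∑ i, u₁ i * M i j
          else (1 - α) * ∑ i, u₂ i * M i j) ≤ F W :=
  stmt12_general m u₁ u₂ hU σ₂ hσ₂ M ω
end
end

section
/- Let d_{z,c} : (0,∞) → ℝ be defined by d_{z,c}(σ) = z/(1 + cσ^{-2}) for parameters z > 0 and c > 0. Then d_{z,c} has a fixed point in (0,∞) if and only if z² ≥ 4c; if z² > 4c the fixed points are exactly f_± = (z ± √(z² − 4c))/2, the larger one f₊ satisfies |d'_{z,c}(f₊)| < 1 (attractive), and the smaller one f₋ satisfies |d'_{z,c}(f₋)| > 1 (repelling); if z² = 4c the unique fixed point is σ = z/2 = c/σ, i.e. σ² = c, and at every attractive fixed point σ one has (1 + cσ^{-2})^{-1} ≥ 1/2. -/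
/-!
Clearing denominators, `σ` is a positive fixed point of `σ ↦ z / (1 + c / σ²)` iff
`σ² - z σ + c = 0`, whose roots `f₊, f₋` have sum `z` and product `c`. Hence they exist iff
`z² ≥ 4c`, and when they are distinct `f₋ < √c < f₊`. At a fixed point the derivative
`2 z c σ / (σ² + c)²` simplifies to `2c / (σ² + c)`, which is `< 1` iff `c < σ²`: so `f₊` attracts,
`f₋` repels, and an attractive fixed point has `c / σ² ≤ 1`.
-/

open Function

noncomputable def salsaMap (z c σ : ℝ) : ℝ := z / (1 + c / σ ^ 2)

section FixedPoints

variable {z c σ : ℝ}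

theorem isFixedPt_salsaMap_iff (hc : 0 ≤ c) (hσ : σ ≠ 0) :
    IsFixedPt (salsaMap z c) σ ↔ σ ^ 2 - z * σ + c = 0 := by
  have hden : 0 < σ ^ 2 + c := by positivity
  have hmap : salsaMap z c σ = z * σ ^ 2 / (σ ^ 2 + c) := by
    unfold salsaMap
    field_simp
  rw [IsFixedPt, hmap, div_eq_iff hden.ne']
  constructor
  · intro h
    have : σ * (σ ^ 2 - z * σ + c) = 0 := by linear_combination -h
    simpa [hσ] using this
  · intro h
    linear_combination -σ * h

theorem hasDerivAt_salsaMap (hc : 0 ≤ c) (hσ : σ ≠ 0) :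
    HasDerivAt (salsaMap z c) (2 * z * c * σ / (σ ^ 2 + c) ^ 2) σ := by
  have hden : σ ^ 2 + c ≠ 0 := by positivity
  have hrat : HasDerivAt (fun x : ℝ => z * x ^ 2 / (x ^ 2 + c))
      ((z * (2 * σ) * (σ ^ 2 + c) - z * σ ^ 2 * (2 * σ)) / (σ ^ 2 + c) ^ 2) σ := by
    have hnum := (hasDerivAt_pow 2 σ).const_mul z
    have hdenom := (hasDerivAt_pow 2 σ).add_const c
    simp only [Nat.cast_ofNat, Nat.add_one_sub_one, pow_one] at hnum hdenom
    exact hnum.div hdenom hden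
  -- the two expressions differ only at `0`, where `c / 0 = 0`
  have heq : salsaMap z c =ᶠ[nhds σ] fun x : ℝ => z * x ^ 2 / (x ^ 2 + c) := by
    filter_upwards [eventually_ne_nhds hσ] with x hx
    unfold salsaMap
    field_simp
  refine (hrat.congr_of_eventuallyEq heq).congr_deriv ?_
  field_simp
  ring

theorem deriv_salsaMap_of_isFixedPt (hc : 0 ≤ c) (hσ : σ ≠ 0)
    (hfix : IsFixedPt (salsaMap z c) σ) :
    deriv (salsaMap z c) σ = 2 * c / (σ ^ 2 + c) := by
  have hquad := (isFixedPt_salsaMap_iff hc hσ).1 hfix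
  have hden : σ ^ 2 + c ≠ 0 := by positivity
  rw [(hasDerivAt_salsaMap hc hσ).deriv, div_eq_div_iff (pow_ne_zero 2 hden) hden]
  linear_combination (-2 * c * (σ ^ 2 + c)) * hquad

theorem abs_deriv_salsaMap_of_isFixedPt (hc : 0 ≤ c) (hσ : σ ≠ 0)
    (hfix : IsFixedPt (salsaMap z c) σ) :
    |deriv (salsaMap z c) σ| = 2 * c / (σ ^ 2 + c) := by
  rw [deriv_salsaMap_of_isFixedPt hc hσ hfix, abs_of_nonneg (by positivity)]

theorem abs_deriv_salsaMap_lt_one_iff (hc : 0 ≤ c) (hσ : σ ≠ 0)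
    (hfix : IsFixedPt (salsaMap z c) σ) :
    |deriv (salsaMap z c) σ| < 1 ↔ c < σ ^ 2 := by
  rw [abs_deriv_salsaMap_of_isFixedPt hc hσ hfix, div_lt_one (by positivity)]
  constructor <;> intro h <;> linarith

theorem one_lt_abs_deriv_salsaMap_iff (hc : 0 ≤ c) (hσ : σ ≠ 0)
    (hfix : IsFixedPt (salsaMap z c) σ) :
    1 < |deriv (salsaMap z c) σ| ↔ σ ^ 2 < c := by
  rw [abs_deriv_salsaMap_of_isFixedPt hc hσ hfix, one_lt_div (by positivity)]
  constructor <;> intro h <;> linarith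

theorem abs_deriv_salsaMap_le_one_iff (hc : 0 ≤ c) (hσ : σ ≠ 0)
    (hfix : IsFixedPt (salsaMap z c) σ) :
    |deriv (salsaMap z c) σ| ≤ 1 ↔ c ≤ σ ^ 2 := by
  rw [abs_deriv_salsaMap_of_isFixedPt hc hσ hfix, div_le_one (by positivity)]
  constructor <;> intro h <;> linarith

end FixedPoints

section Roots

variable {z c : ℝ}

theorem roots_add (z c : ℝ) : (z + √(z ^ 2 - 4 * c)) / 2 + (z - √(z ^ 2 - 4 * c)) / 2 = z := by
  ring

theorem roots_mul (h : 4 * c ≤ z ^ 2) :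
    (z + √(z ^ 2 - 4 * c)) / 2 * ((z - √(z ^ 2 - 4 * c)) / 2) = c := by
  linear_combination (-1 / 4 : ℝ) * Real.sq_sqrt (sub_nonneg.2 h)

theorem sq_sub_mul_add_eq_zero_iff (h : 4 * c ≤ z ^ 2) (σ : ℝ) :
    σ ^ 2 - z * σ + c = 0 ↔
      σ = (z + √(z ^ 2 - 4 * c)) / 2 ∨ σ = (z - √(z ^ 2 - 4 * c)) / 2 := by
  have hfactor : σ ^ 2 - z * σ + c =
      (σ - (z + √(z ^ 2 - 4 * c)) / 2) * (σ - (z - √(z ^ 2 - 4 * c)) / 2) := by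
    linear_combination σ * roots_add z c - roots_mul h
  rw [hfactor, mul_eq_zero, sub_eq_zero, sub_eq_zero]

theorem four_mul_le_sq_of_sq_sub_mul_add_eq_zero {σ : ℝ} (hσ : σ ^ 2 - z * σ + c = 0) :
    4 * c ≤ z ^ 2 := by
  nlinarith [sq_nonneg (2 * σ - z)]

theorem half_le_root_add : z / 2 ≤ (z + √(z ^ 2 - 4 * c)) / 2 := by
  have := Real.sqrt_nonneg (z ^ 2 - 4 * c)
  linarith

theorem root_sub_lt_root_add (h : 4 * c < z ^ 2) :
    (z - √(z ^ 2 - 4 * c)) / 2 < (z + √(z ^ 2 - 4 * c)) / 2 := by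
  have := Real.sqrt_pos.2 (sub_pos.2 h)
  linarith

theorem sq_lt_of_mul_eq_of_lt {a b c : ℝ} (ha : 0 < a) (hab : a < b) (hmul : b * a = c) :
    a ^ 2 < c ∧ c < b ^ 2 := by
  constructor <;> nlinarith

end Roots

theorem half_le_inv_one_add_div_sq {c σ : ℝ} (hc : 0 ≤ c) (h : c ≤ σ ^ 2) :
    1 / 2 ≤ (1 + c / σ ^ 2)⁻¹ := by
  rw [one_div]
  exact inv_anti₀ (by positivity) (by linarith [div_le_one_of_le₀ h (sq_nonneg σ)])

/-- fixed-point analysis of the SALSA filter map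
`d(σ) = z/(1 + c σ⁻²)` for `z, c > 0`. -/
theorem stmt15 (z c : ℝ) (hz : 0 < z) (hc : 0 < c) :
    let d : ℝ → ℝ := fun σ => z / (1 + c / σ ^ 2)
    let fp : ℝ := (z + Real.sqrt (z ^ 2 - 4 * c)) / 2
    let fm : ℝ := (z - Real.sqrt (z ^ 2 - 4 * c)) / 2
    -- existence of a positive fixed point iff z² ≥ 4c
    ((∃ σ : ℝ, 0 < σ ∧ d σ = σ) ↔ z ^ 2 ≥ 4 * c) ∧
    -- if z² > 4c, the fixed points are exactly f₊ and f₋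
    (z ^ 2 > 4 * c → ∀ σ : ℝ, 0 < σ → (d σ = σ ↔ σ = fp ∨ σ = fm)) ∧
    -- f₊ is attractive, f₋ is repelling
    (z ^ 2 > 4 * c → |deriv d fp| < 1 ∧ |deriv d fm| > 1) ∧
    -- degenerate case z² = 4c: unique fixed point σ = z/2 with σ² = c
    (z ^ 2 = 4 * c → (∀ σ : ℝ, 0 < σ → (d σ = σ ↔ σ = z / 2)) ∧ (z / 2) ^ 2 = c) ∧
    -- at every attractive fixed point the filter value is at least 1/2
    (∀ σ : ℝ, 0 < σ → d σ = σ → |deriv d σ| ≤ 1 → (1 / 2 : ℝ) ≤ (1 + c / σ ^ 2)⁻¹) := by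
  intro d fp fm
  have hfix : ∀ σ, 0 < σ → (d σ = σ ↔ σ ^ 2 - z * σ + c = 0) := fun σ hσ =>
    isFixedPt_salsaMap_iff hc.le hσ.ne'
  have hfp : 0 < fp := (half_pos hz).trans_le half_le_root_add
  refine ⟨⟨?_, fun h => ?_⟩, fun h σ hσ => ?_, fun h => ?_, fun h => ?_, fun σ hσ hdσ hstable => ?_⟩
  · rintro ⟨σ, hσ, hdσ⟩
    exact four_mul_le_sq_of_sq_sub_mul_add_eq_zero ((hfix σ hσ).1 hdσ)
  · exact ⟨fp, hfp, (hfix fp hfp).2 ((sq_sub_mul_add_eq_zero_iff h fp).2 (.inl rfl))⟩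
  · exact (hfix σ hσ).trans (sq_sub_mul_add_eq_zero_iff h.le σ)
  · have hlt : fm < fp := root_sub_lt_root_add h
    have hfm : 0 < fm := pos_of_mul_pos_right (roots_mul h.le ▸ hc) hfp.le
    have hroots := sq_lt_of_mul_eq_of_lt hfm hlt (roots_mul h.le)
    have hfixed : ∀ σ, 0 < σ → (σ = fp ∨ σ = fm) → IsFixedPt (salsaMap z c) σ :=
      fun σ hσ hσroot => (hfix σ hσ).2 ((sq_sub_mul_add_eq_zero_iff h.le σ).2 hσroot)
    exact ⟨(abs_deriv_salsaMap_lt_one_iff hc.le hfp.ne' (hfixed fp hfp (.inl rfl))).2 hroots.2,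
      (one_lt_abs_deriv_salsaMap_iff hc.le hfm.ne' (hfixed fm hfm (.inr rfl))).2 hroots.1⟩
  · have hsqrt : √(z ^ 2 - 4 * c) = 0 := by rw [h, sub_self, Real.sqrt_zero]
    refine ⟨fun σ hσ => ?_, by linear_combination h / 4⟩
    rw [hfix σ hσ, sq_sub_mul_add_eq_zero_iff h.ge, hsqrt, add_zero, sub_zero, or_self]
  · exact half_le_inv_one_add_div_sq hc.le
      ((abs_deriv_salsaMap_le_one_iff hc.le hσ.ne' hdσ).1 hstable)
end
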